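/- arXiv:2102.01580 — 9 statements merged into one kernel-verified Lean document; each statement's English description precedes it below -/
import Mathlib

section
/- Let α ∈ (0,1], and assume either α < 1, or α = 1 and GᵀΣ_ν⁻¹G is positive definite (equivalently Range(Gᵀ) = ℝ^{N_θ}). Then the steady-state equation C_∞⁻¹ = GᵀΣ_ν⁻¹G + (α²C_∞ + Σ_ω)⁻¹ has a unique symmetric positive definite solution C_∞ ∈ ℝ^{N_θ×N_θ}. -/
/-!
Put `B = Gᵀ Σ_ν⁻¹ G`, `a = α²` and `Φ(X) = (B + (a X + Σ_ω)⁻¹)⁻¹`; the solutions are the positive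
definite fixed points of `Φ`. Inversion is antitone in the Loewner order, so `Φ` is monotone and its
iterates from `0` increase. They stay below `(1 - a)⁻¹ Σ_ω` when `a < 1` and below `B⁻¹` when `B` is
positive definite, hence converge, and the limit is a fixed point.

For two solutions `C₁, C₂` with `Mᵢ = a Cᵢ + Σ_ω`, the equation gives `C₁⁻¹ - C₂⁻¹ = M₁⁻¹ - M₂⁻¹`;
expanding `X⁻¹ - Y⁻¹ = X⁻¹ (Y - X) Y⁻¹` on both sides, `D = C₂ - C₁` satisfies
`C₁⁻¹ D C₂⁻¹ = (a M₁⁻¹) D M₂⁻¹`. Here `C₂⁻¹ - M₂⁻¹ = B ⪰ 0`, while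
`C₁⁻¹ - a M₁⁻¹ = B + (1 - a) M₁⁻¹` is positive definite under either hypothesis, and a trace
computation forces `D = 0`.
-/

open Matrix Filter Topology
open scoped MatrixOrder ComplexOrder

namespace Matrix

section RCLike

variable {n 𝕜 : Type*} [Fintype n] [DecidableEq n] [RCLike 𝕜]

omit [Fintype n] [DecidableEq n] in
theorem PosDef.of_le {A B : Matrix n n 𝕜} (hA : A.PosDef) (hAB : A ≤ B) : B.PosDef := by
  simpa using hA.add_posSemidef hAB

theorem PosDef.inv_inv {A : Matrix n n 𝕜} (hA : A.PosDef) : A⁻¹⁻¹ = A :=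
  nonsing_inv_nonsing_inv A ((isUnit_iff_isUnit_det A).mp hA.isUnit)

/-- The two Schur complements of the block matrix `[B, 1; 1, A⁻¹]` are `B - A` and `A⁻¹ - B⁻¹`. -/
theorem PosDef.inv_anti {A B : Matrix n n 𝕜} (hA : A.PosDef) (hAB : A ≤ B) : B⁻¹ ≤ A⁻¹ := by
  have hB := hA.of_le hAB
  let := hA.isUnit.invertible
  let := hB.isUnit.invertible
  let := hA.inv.isUnit.invertible
  have hblock : (fromBlocks B 1 1ᴴ A⁻¹).PosSemidef := by
    rw [PosDef.fromBlocks₂₂ _ _ hA.inv]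
    simpa [le_iff] using hAB
  rw [PosDef.fromBlocks₁₁ _ _ hB] at hblock
  rw [le_iff]
  simpa using hblock

lemma trace_mul_nonneg {A B : Matrix n n 𝕜} (hA : 0 ≤ A) (hB : 0 ≤ B) : 0 ≤ (A * B).trace := by
  obtain ⟨Z, rfl⟩ := CStarAlgebra.nonneg_iff_eq_star_mul_self.mp hB
  rw [star_eq_conjTranspose, ← Matrix.mul_assoc, trace_mul_cycle]
  exact ((nonneg_iff_posSemidef.mp hA).mul_mul_conjTranspose_same Z).trace_nonneg

lemma eq_zero_of_trace_conjTranspose_mul_mul_mul_eq_zero {W V D : Matrix n n 𝕜} (hW : W.PosDef)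
    (hV : V.PosDef) (h : (Dᴴ * W * D * V).trace = 0) : D = 0 := by
  obtain ⟨Y, rfl⟩ := CStarAlgebra.nonneg_iff_eq_star_mul_self.mp hW.posSemidef.nonneg
  obtain ⟨Z, rfl⟩ := CStarAlgebra.nonneg_iff_eq_star_mul_self.mp hV.posSemidef.nonneg
  have hY : IsUnit Y := isUnit_of_mul_isUnit_right hW.isUnit
  have hZ : IsUnit Zᴴ := isUnit_of_mul_isUnit_left hV.isUnit
  have htrace : ((Y * D * Zᴴ)ᴴ * (Y * D * Zᴴ)).trace
      = (Dᴴ * (star Y * Y) * D * (star Z * Z)).trace := by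
    simp only [conjTranspose_mul, conjTranspose_conjTranspose, star_eq_conjTranspose,
      Matrix.mul_assoc]
    rw [trace_mul_comm]
    simp only [Matrix.mul_assoc]
  rwa [← htrace, trace_conjTranspose_mul_self_eq_zero_iff, hZ.mul_left_eq_zero,
    hY.mul_right_eq_zero] at h

/-- The trace of `Dᴴ W₁ D W₂ - Dᴴ P₁ D P₂` splits into two nonnegative terms, the first of which
can only vanish when `D = 0`. -/
lemma eq_zero_of_mul_mul_eq_mul_mul {W₁ W₂ P₁ P₂ D : Matrix n n 𝕜} (hW₂ : W₂.PosDef)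
    (hP₁ : 0 ≤ P₁) (h₁ : (W₁ - P₁).PosDef) (h₂ : P₂ ≤ W₂)
    (hD : W₁ * D * W₂ = P₁ * D * P₂) : D = 0 := by
  have hsum : (Dᴴ * (W₁ - P₁) * D * W₂).trace + (Dᴴ * P₁ * D * (W₂ - P₂)).trace = 0 := by
    have h := congrArg (fun X => (Dᴴ * X).trace) hD
    simp only [Matrix.mul_sub, Matrix.sub_mul, trace_sub, Matrix.mul_assoc] at h ⊢
    rw [h]
    abel
  have h₁' : 0 ≤ (Dᴴ * (W₁ - P₁) * D * W₂).trace :=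
    trace_mul_nonneg (h₁.posSemidef.conjTranspose_mul_mul_same D).nonneg hW₂.posSemidef.nonneg
  have h₂' : 0 ≤ (Dᴴ * P₁ * D * (W₂ - P₂)).trace :=
    trace_mul_nonneg ((nonneg_iff_posSemidef.mp hP₁).conjTranspose_mul_mul_same D).nonneg
      (sub_nonneg.mpr h₂)
  exact eq_zero_of_trace_conjTranspose_mul_mul_mul_eq_zero h₁ hW₂
    ((add_eq_zero_iff_of_nonneg h₁' h₂').mp hsum).1

theorem PosDef.continuousAt_inv {A : Matrix n n 𝕜} (hA : A.PosDef) : ContinuousAt Inv.inv A :=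
  continuousAt_matrix_inv A (by rw [Ring.inverse_eq_inv']; exact continuousAt_inv₀ hA.det_pos.ne')

end RCLike

section Real

variable {n : Type*} [Fintype n]

lemma dotProduct_mulVec_le_of_le {A B : Matrix n n ℝ} (h : A ≤ B) (v : n → ℝ) :
    v ⬝ᵥ A *ᵥ v ≤ v ⬝ᵥ B *ᵥ v := by
  have := (le_iff.mp h).dotProduct_mulVec_nonneg v
  rwa [star_trivial, sub_mulVec, dotProduct_sub, sub_nonneg] at this

lemma isClosed_setOf_le (B : Matrix n n ℝ) : IsClosed {A : Matrix n n ℝ | B ≤ A} := by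
  simp only [le_iff, posSemidef_iff_dotProduct_mulVec, IsHermitian, star_trivial, Set.ofPred_and,
    Set.ofPred_forall]
  refine .inter (isClosed_eq (by fun_prop) (by fun_prop)) (isClosed_iInter fun v => ?_)
  exact isClosed_le continuous_const (by fun_prop)

variable [DecidableEq n]

lemma IsHermitian.two_mul_apply {A : Matrix n n ℝ} (hA : A.IsHermitian) (i j : n) :
    2 * A i j = (Pi.single i 1 + Pi.single j 1) ⬝ᵥ A *ᵥ (Pi.single i 1 + Pi.single j 1)
      - Pi.single i 1 ⬝ᵥ A *ᵥ Pi.single i 1 - Pi.single j 1 ⬝ᵥ A *ᵥ Pi.single j 1 := by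
  have hji : A j i = A i j := by simpa using hA.apply i j
  simp [mulVec_add, dotProduct_add, add_dotProduct, hji]
  ring

/-- Monotone convergence for the Loewner order: the quadratic forms converge as bounded monotone
real sequences, and the entries are recovered from them by polarization. -/
theorem exists_tendsto_of_monotone_of_le {f : ℕ → Matrix n n ℝ} {K : Matrix n n ℝ}
    (hf : Monotone f) (hherm : ∀ k, (f k).IsHermitian) (hK : ∀ k, f k ≤ K) :
    ∃ C, Tendsto f atTop (𝓝 C) ∧ ∀ k, f k ≤ C := by
  have hquad (v : n → ℝ) : ∃ q, Tendsto (fun k => v ⬝ᵥ f k *ᵥ v) atTop (𝓝 q) :=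
    ⟨_, tendsto_atTop_ciSup (fun k l hkl => dotProduct_mulVec_le_of_le (hf hkl) v)
      ⟨v ⬝ᵥ K *ᵥ v, by rintro _ ⟨k, rfl⟩; exact dotProduct_mulVec_le_of_le (hK k) v⟩⟩
  have hentry (i j : n) : ∃ c, Tendsto (fun k => f k i j) atTop (𝓝 c) := by
    obtain ⟨q₀, h₀⟩ := hquad (Pi.single i 1 + Pi.single j 1)
    obtain ⟨q₁, h₁⟩ := hquad (Pi.single i 1)
    obtain ⟨q₂, h₂⟩ := hquad (Pi.single j 1)
    refine ⟨(q₀ - q₁ - q₂) / 2, (((h₀.sub h₁).sub h₂).div_const 2).congr fun k => ?_⟩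
    rw [← (hherm k).two_mul_apply i j]
    ring
  choose c hc using hentry
  have hlim : Tendsto f atTop (𝓝 (Matrix.of c)) :=
    tendsto_pi_nhds.2 fun i => tendsto_pi_nhds.2 fun j => hc i j
  exact ⟨_, hlim, fun k => (isClosed_setOf_le (f k)).mem_of_tendsto hlim
    (eventually_atTop.2 ⟨k, fun _ hm => hf hm⟩)⟩

end Real

end Matrix

section Riccati

variable {n : Type*} [Fintype n] [DecidableEq n] {B S X Y C : Matrix n n ℝ} {a : ℝ}

noncomputable def riccatiMap (B S : Matrix n n ℝ) (a : ℝ) (X : Matrix n n ℝ) : Matrix n n ℝ :=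
  (B + (a • X + S)⁻¹)⁻¹

def IsRiccatiSolution (B S : Matrix n n ℝ) (a : ℝ) (C : Matrix n n ℝ) : Prop :=
  C.PosDef ∧ C⁻¹ = B + (a • C + S)⁻¹

omit [DecidableEq n] in
lemma posDef_smul_add (hS : S.PosDef) (ha : 0 ≤ a) (hX : 0 ≤ X) : (a • X + S).PosDef :=
  PosDef.posSemidef_add (smul_nonneg ha hX).posSemidef hS

lemma posDef_add_inv_smul_add (hB : 0 ≤ B) (hS : S.PosDef) (ha : 0 ≤ a) (hX : 0 ≤ X) :
    (B + (a • X + S)⁻¹).PosDef :=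
  PosDef.posSemidef_add hB.posSemidef (posDef_smul_add hS ha hX).inv

lemma riccatiMap_posDef (hB : 0 ≤ B) (hS : S.PosDef) (ha : 0 ≤ a) (hX : 0 ≤ X) :
    (riccatiMap B S a X).PosDef :=
  (posDef_add_inv_smul_add hB hS ha hX).inv

lemma riccatiMap_mono (hB : 0 ≤ B) (hS : S.PosDef) (ha : 0 ≤ a) (hX : 0 ≤ X) (hXY : X ≤ Y) :
    riccatiMap B S a X ≤ riccatiMap B S a Y :=
  (posDef_add_inv_smul_add hB hS ha (hX.trans hXY)).inv_anti <| add_le_add le_rfl <|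
    (posDef_smul_add hS ha hX).inv_anti (add_le_add (smul_le_smul_of_nonneg_left hXY ha) le_rfl)

lemma riccatiMap_le_smul_add (hB : 0 ≤ B) (hS : S.PosDef) (ha : 0 ≤ a) (hX : 0 ≤ X) :
    riccatiMap B S a X ≤ a • X + S := by
  have hM := posDef_smul_add hS ha hX
  simpa only [riccatiMap, hM.inv_inv] using hM.inv.inv_anti (le_add_of_nonneg_left hB)

lemma riccatiMap_le_inv (hB : B.PosDef) (hS : S.PosDef) (ha : 0 ≤ a) (hX : 0 ≤ X) :
    riccatiMap B S a X ≤ B⁻¹ :=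
  hB.inv_anti (le_add_of_nonneg_right (posDef_smul_add hS ha hX).inv.posSemidef.nonneg)

lemma continuousAt_riccatiMap (hB : 0 ≤ B) (hS : S.PosDef) (ha : 0 ≤ a) (hX : 0 ≤ X) :
    ContinuousAt (riccatiMap B S a) X :=
  (posDef_add_inv_smul_add hB hS ha hX).continuousAt_inv.comp (f := fun Y => B + (a • Y + S)⁻¹) <|
    continuousAt_const.add <|
    (posDef_smul_add hS ha hX).continuousAt_inv.comp (f := fun Y => a • Y + S) (by fun_prop)

lemma isRiccatiSolution_of_riccatiMap_eq (hB : 0 ≤ B) (hS : S.PosDef) (ha : 0 ≤ a) (hC : 0 ≤ C)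
    (hfix : riccatiMap B S a C = C) : IsRiccatiSolution B S a C := by
  have hpd := posDef_add_inv_smul_add hB hS ha hC
  refine ⟨hfix ▸ hpd.inv, ?_⟩
  conv_lhs => rw [← hfix]
  exact hpd.inv_inv

theorem exists_isRiccatiSolution (hB : 0 ≤ B) (hS : S.PosDef) (ha : 0 ≤ a) {K : Matrix n n ℝ}
    (hK₀ : 0 ≤ K) (hK : ∀ X, 0 ≤ X → X ≤ K → riccatiMap B S a X ≤ K) :
    ∃ C, IsRiccatiSolution B S a C := by
  set f : ℕ → Matrix n n ℝ := fun k => (riccatiMap B S a)^[k] 0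
  have hf_succ (k : ℕ) : f (k + 1) = riccatiMap B S a (f k) := Function.iterate_succ_apply' ..
  have hf_nonneg (k : ℕ) : 0 ≤ f k := by
    induction k with
    | zero => exact le_rfl
    | succ k ih => rw [hf_succ]; exact (riccatiMap_posDef hB hS ha ih).posSemidef.nonneg
  have hf_le (k : ℕ) : f k ≤ K := by
    induction k with
    | zero => exact hK₀
    | succ k ih => rw [hf_succ]; exact hK _ (hf_nonneg k) ih
  have hf_mono : Monotone f := by
    refine monotone_nat_of_le_succ fun k => ?_
    induction k with
    | zero => exact hf_nonneg 1
    | succ k ih => rw [hf_succ, hf_succ (k + 1)]; exact riccatiMap_mono hB hS ha (hf_nonneg k) ih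
  obtain ⟨C, hfC, hle⟩ := exists_tendsto_of_monotone_of_le hf_mono
    (fun k => (hf_nonneg k).posSemidef.isHermitian) hf_le
  have hC : 0 ≤ C := (hf_nonneg 0).trans (hle 0)
  refine ⟨C, isRiccatiSolution_of_riccatiMap_eq hB hS ha hC (tendsto_nhds_unique
    ((continuousAt_riccatiMap hB hS ha hC).tendsto.comp hfC) ?_)⟩
  simpa only [Function.comp_def, ← hf_succ] using (tendsto_add_atTop_iff_nat 1).2 hfC

lemma riccatiMap_le_of_lt_one (hB : 0 ≤ B) (hS : S.PosDef) (ha : 0 ≤ a) (ha₁ : a < 1)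
    (hX : 0 ≤ X) (hXK : X ≤ (1 - a)⁻¹ • S) : riccatiMap B S a X ≤ (1 - a)⁻¹ • S :=
  calc riccatiMap B S a X ≤ a • X + S := riccatiMap_le_smul_add hB hS ha hX
    _ ≤ a • ((1 - a)⁻¹ • S) + S := add_le_add (smul_le_smul_of_nonneg_left hXK ha) le_rfl
    _ = (1 - a)⁻¹ • S := by
      match_scalars
      field_simp [(sub_pos.2 ha₁).ne']
      ring

theorem IsRiccatiSolution.unique (hB : 0 ≤ B) (hS : S.PosDef) (ha : 0 ≤ a) {C₁ C₂ : Matrix n n ℝ}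
    (h₁ : IsRiccatiSolution B S a C₁) (h₂ : IsRiccatiSolution B S a C₂)
    (hstrict : (C₁⁻¹ - a • (a • C₁ + S)⁻¹).PosDef) : C₁ = C₂ := by
  have hM₁ := posDef_smul_add hS ha h₁.1.posSemidef.nonneg
  have hM₂ := posDef_smul_add hS ha h₂.1.posSemidef.nonneg
  have hD : C₁⁻¹ * (C₂ - C₁) * C₂⁻¹ = (a • (a • C₁ + S)⁻¹) * (C₂ - C₁) * (a • C₂ + S)⁻¹ := by
    have hM : (a • (a • C₁ + S)⁻¹) * (C₂ - C₁) * (a • C₂ + S)⁻¹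
        = (a • C₁ + S)⁻¹ * ((a • C₂ + S) - (a • C₁ + S)) * (a • C₂ + S)⁻¹ := by
      simp only [Matrix.smul_mul, Matrix.mul_smul, ← smul_sub, add_sub_add_right_eq_sub]
    rw [hM, ← inv_sub_inv (iff_of_true hM₁.isUnit hM₂.isUnit),
      ← inv_sub_inv (iff_of_true h₁.1.isUnit h₂.1.isUnit), h₁.2, h₂.2, add_sub_add_left_eq_sub]
  have hP₂ : (a • C₂ + S)⁻¹ ≤ C₂⁻¹ := h₂.2 ▸ le_add_of_nonneg_left hB
  exact (sub_eq_zero.mp (eq_zero_of_mul_mul_eq_mul_mul h₂.1.inv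
    (smul_nonneg ha hM₁.inv.posSemidef.nonneg) hstrict hP₂ hD)).symm

lemma IsRiccatiSolution.posDef_inv_sub_smul_inv (hB : 0 ≤ B) (hS : S.PosDef) (ha : 0 ≤ a)
    (hC : IsRiccatiSolution B S a C) (hcase : a < 1 ∨ (a = 1 ∧ B.PosDef)) :
    (C⁻¹ - a • (a • C + S)⁻¹).PosDef := by
  have hM := posDef_smul_add hS ha hC.1.posSemidef.nonneg
  have hsub : (a • C + S)⁻¹ - a • (a • C + S)⁻¹ = (1 - a) • (a • C + S)⁻¹ := by
    rw [sub_smul, one_smul]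
  rw [hC.2, add_sub_assoc, hsub]
  rcases hcase with ha₁ | ⟨rfl, hBpd⟩
  · exact PosDef.posSemidef_add hB.posSemidef (hM.inv.smul (sub_pos.2 ha₁))
  · simpa using hBpd

theorem existsUnique_isRiccatiSolution (hB : 0 ≤ B) (hS : S.PosDef) (ha : 0 ≤ a)
    (hcase : a < 1 ∨ (a = 1 ∧ B.PosDef)) : ∃! C, IsRiccatiSolution B S a C := by
  obtain ⟨C, hC⟩ : ∃ C, IsRiccatiSolution B S a C := by
    rcases hcase with ha₁ | ⟨-, hBpd⟩
    · exact exists_isRiccatiSolution hB hS ha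
        (smul_nonneg (inv_nonneg.2 (sub_pos.2 ha₁).le) hS.posSemidef.nonneg)
        fun X hX hXK => riccatiMap_le_of_lt_one hB hS ha ha₁ hX hXK
    · exact exists_isRiccatiSolution hB hS ha hBpd.inv.posSemidef.nonneg
        fun X hX _ => riccatiMap_le_inv hBpd hS ha hX
  exact ⟨C, hC, fun C' hC' =>
    hC'.unique hB hS ha hC (hC'.posDef_inv_sub_smul_inv hB hS ha hcase)⟩

end Riccati

theorem steady_state_covariance_exists_unique_general
    {Nθ Ny : ℕ}
    (G : Matrix (Fin Ny) (Fin Nθ) ℝ)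
    (Sν : Matrix (Fin Ny) (Fin Ny) ℝ) (hSν : Sν.PosDef)
    (Sω : Matrix (Fin Nθ) (Fin Nθ) ℝ) (hSω : Sω.PosDef)
    (α : ℝ) (hα : α ∈ Set.Ioc (0 : ℝ) 1)
    (hcase : α < 1 ∨ (α = 1 ∧ (Gᵀ * Sν⁻¹ * G).PosDef)) :
    ∃! Cinf : Matrix (Fin Nθ) (Fin Nθ) ℝ,
      Cinf.PosDef ∧ Cinf⁻¹ = Gᵀ * Sν⁻¹ * G + (α ^ 2 • Cinf + Sω)⁻¹ := by
  have hB : 0 ≤ Gᵀ * Sν⁻¹ * G := by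
    simpa using (hSν.inv.posSemidef.conjTranspose_mul_mul_same G).nonneg
  refine existsUnique_isRiccatiSolution hB hSω (sq_nonneg α) ?_
  rcases hcase with hlt | ⟨rfl, hBpd⟩
  · exact .inl (pow_lt_one₀ hα.1.le hlt two_ne_zero)
  · exact .inr ⟨one_pow 2, hBpd⟩

/-- Let `α ∈ (0,1]`, and assume either `α < 1`, or `α = 1` and
`Gᵀ Sν⁻¹ G` is positive definite. Then the steady-state equation
`Cinf⁻¹ = Gᵀ Sν⁻¹ G + (α² Cinf + Sω)⁻¹` has a unique symmetric positive definite
solution `Cinf`. -/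
theorem steady_state_covariance_exists_unique
    {Nθ Ny : ℕ} (hNθ : 0 < Nθ) (hNy : 0 < Ny)
    (G : Matrix (Fin Ny) (Fin Nθ) ℝ)
    (Sν : Matrix (Fin Ny) (Fin Ny) ℝ) (hSν : Sν.PosDef)
    (Sω : Matrix (Fin Nθ) (Fin Nθ) ℝ) (hSω : Sω.PosDef)
    (α : ℝ) (hα : α ∈ Set.Ioc (0 : ℝ) 1)
    (hcase : α < 1 ∨ (α = 1 ∧ (Gᵀ * Sν⁻¹ * G).PosDef)) :
    ∃! Cinf : Matrix (Fin Nθ) (Fin Nθ) ℝ,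
      Cinf.PosDef ∧ Cinf⁻¹ = Gᵀ * Sν⁻¹ * G + (α ^ 2 • Cinf + Sω)⁻¹ :=
  steady_state_covariance_exists_unique_general G Sν hSν Sω hSω α hα hcase
end

section
/- Assume either α ∈ (0,1), or α = 1 and GᵀΣ_ν⁻¹G is positive definite. Let C_∞ be the unique positive definite solution of C_∞⁻¹ = GᵀΣ_ν⁻¹G + (α²C_∞ + Σ_ω)⁻¹. Then for every symmetric positive semidefinite initial matrix C_0, the covariance sequence of the Kalman iteration converges to C_∞ exponentially fast: each C_n (n ≥ 1) is positive definite and there exist K > 0 and r ∈ (0,1) such that ‖C_n⁻¹ − C_∞⁻¹‖ ≤ K rⁿ for all n ≥ 1. -/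
/-!
Measure the distance between positive definite matrices by Thompson's part metric,
`d(X, Y) ≤ t ↔ e⁻ᵗ Y ≤ X ≤ eᵗ Y`. Scaling by `α²`, adding the positive semidefinite
`B = Gᵀ Σ_ν⁻¹ G` and matrix inversion do not increase `d`, while adding `Σ_ω ≥ s • 1` to matrices
bounded by `m • 1` contracts it by the factor `m / (m + s) < 1`. The Kalman covariance update
`X ↦ (B + (α² X + Σ_ω)⁻¹)⁻¹` is a composition of these maps, and the iterates stay within a fixed
distance of the fixed point `C∞`, hence uniformly bounded; so `d(C n, C∞)` decays geometrically,
and `‖X⁻¹ - Y⁻¹‖ ≤ (e^{d(X, Y)} - 1) ‖Y⁻¹‖` converts this into the operator-norm bound.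
-/

open Matrix
open scoped Matrix.Norms.L2Operator MatrixOrder

theorem Real.add_le_mul_exp_add_mul_exp {m s : ℝ} (hm : 0 ≤ m) (hs : 0 < s) (t : ℝ) :
    m + s ≤ s * Real.exp (m / (m + s) * t) + m * Real.exp ((m / (m + s) - 1) * t) := by
  set β := m / (m + s)
  have hβ : β * (m + s) = m := div_mul_cancel₀ m (by positivity)
  have h₁ := mul_le_mul_of_nonneg_left (Real.add_one_le_exp (β * t)) hs.le
  have h₂ := mul_le_mul_of_nonneg_left (Real.add_one_le_exp ((β - 1) * t)) hm
  linear_combination h₁ + h₂ - t * hβ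

theorem Real.exp_sub_one_le_mul_exp {t u : ℝ} (ht : 0 ≤ t) (htu : t ≤ u) :
    Real.exp t - 1 ≤ t * Real.exp u := by
  have h := mul_le_mul_of_nonneg_left (Real.one_sub_le_exp_neg t) (Real.exp_pos t).le
  rw [← Real.exp_add, add_neg_cancel, Real.exp_zero] at h
  nlinarith [Real.exp_le_exp.2 htu]

/-- Thompson's part metric between `x` and `y` is at most `t`. -/
def ThompsonClose {E : Type*} [LE E] [SMul ℝ E] (t : ℝ) (x y : E) : Prop :=
  x ≤ Real.exp t • y ∧ y ≤ Real.exp t • x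

namespace ThompsonClose

variable {E : Type*} [AddCommGroup E] [PartialOrder E] [Module ℝ E] {t u : ℝ} {x y z : E}

theorem refl (x : E) : ThompsonClose 0 x x := by simp [ThompsonClose]

theorem symm (h : ThompsonClose t x y) : ThompsonClose t y x := And.symm h

section PosSMulMono

variable [PosSMulMono ℝ E]

theorem trans (hxy : ThompsonClose t x y) (hyz : ThompsonClose u y z) :
    ThompsonClose (t + u) x z := by
  rw [ThompsonClose, Real.exp_add, mul_smul, mul_comm, mul_smul]
  exact ⟨hxy.1.trans (smul_le_smul_of_nonneg_left hyz.1 (Real.exp_pos t).le),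
    hyz.2.trans (smul_le_smul_of_nonneg_left hxy.2 (Real.exp_pos u).le)⟩

theorem smul (h : ThompsonClose t x y) {c : ℝ} (hc : 0 ≤ c) :
    ThompsonClose t (c • x) (c • y) := by
  rw [ThompsonClose, smul_comm _ c y, smul_comm _ c x]
  exact ⟨smul_le_smul_of_nonneg_left h.1 hc, smul_le_smul_of_nonneg_left h.2 hc⟩

theorem exp_neg_smul_le (h : ThompsonClose t x y) : Real.exp (-t) • y ≤ x := by
  simpa [smul_smul, ← Real.exp_add] using smul_le_smul_of_nonneg_left h.2 (Real.exp_pos (-t)).le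

end PosSMulMono

section SMulPosMono

variable [SMulPosMono ℝ E]

variable [IsOrderedAddMonoid E]

theorem nonneg_add (h : ThompsonClose t x y) (ht : 0 ≤ t) {b : E} (hb : 0 ≤ b) :
    ThompsonClose t (b + x) (b + y) := by
  have hb' : b ≤ Real.exp t • b := le_smul_of_one_le_left hb (Real.one_le_exp ht)
  rw [ThompsonClose, smul_add, smul_add]
  exact ⟨add_le_add hb' h.1, add_le_add hb' h.2⟩

variable [PosSMulMono ℝ E]

theorem add_le_exp_smul_add {m s : ℝ} (hm : 0 ≤ m) (hs : 0 < s) {e S : E} (he : 0 ≤ e)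
    (ht : 0 ≤ t) (hxy : x ≤ Real.exp t • y) (hx : x ≤ m • e) (hS : s • e ≤ S) :
    x + S ≤ Real.exp (m / (m + s) * t) • (y + S) := by
  set β := m / (m + s)
  set q := Real.exp ((β - 1) * t)
  have hβ₀ : 0 ≤ β := by positivity
  have hβ₁ : β ≤ 1 := div_le_one_of_le₀ (by linarith) (by positivity)
  have hq₀ : 0 ≤ q := (Real.exp_pos _).le
  have hq₁ : q ≤ 1 := Real.exp_le_one_iff.2 (mul_nonpos_of_nonpos_of_nonneg (by linarith) ht)
  have hqt : q * Real.exp t = Real.exp (β * t) := by rw [← Real.exp_add]; ring_nf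
  have hexp : 1 ≤ Real.exp (β * t) := Real.one_le_exp (mul_nonneg hβ₀ ht)
  have hscalar : (1 - q) * m ≤ (Real.exp (β * t) - 1) * s := by
    nlinarith [Real.add_le_mul_exp_add_mul_exp hm hs t]
  -- The part `q • x` uses the ratio bound, the part `(1 - q) • x` the bound by `m • e`,
  -- and the latter is absorbed by the extra `(e^{βt} - 1) • S`.
  calc x + S = q • x + (1 - q) • x + S := by rw [← add_smul]; simp
    _ ≤ q • (Real.exp t • y) + (1 - q) • (m • e) + S := by gcongr
    _ = Real.exp (β * t) • y + ((1 - q) * m) • e + S := by rw [smul_smul, hqt, mul_smul]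
    _ ≤ Real.exp (β * t) • y + ((Real.exp (β * t) - 1) * s) • e + S := by gcongr
    _ ≤ Real.exp (β * t) • y + (Real.exp (β * t) - 1) • S + S := by rw [mul_smul]; gcongr
    _ = Real.exp (β * t) • (y + S) := by rw [sub_smul, one_smul, smul_add]; abel

theorem add_contract {m s : ℝ} (hm : 0 ≤ m) (hs : 0 < s) {e S : E} (he : 0 ≤ e)
    (ht : 0 ≤ t) (h : ThompsonClose t x y) (hx : x ≤ m • e) (hy : y ≤ m • e) (hS : s • e ≤ S) :
    ThompsonClose (m / (m + s) * t) (x + S) (y + S) :=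
  ⟨add_le_exp_smul_add hm hs he ht h.1 hx hS, add_le_exp_smul_add hm hs he ht h.2 hy hS⟩

end SMulPosMono

theorem pow_mul_of_step {x : ℕ → E} {p : E} {β t₀ : ℝ} (hβ₀ : 0 ≤ β) (hβ₁ : β ≤ 1)
    (ht₀ : 0 ≤ t₀) (h₀ : ThompsonClose t₀ (x 0) p)
    (hstep : ∀ n t, 0 ≤ t → t ≤ t₀ → ThompsonClose t (x n) p →
      ThompsonClose (β * t) (x (n + 1)) p) (n : ℕ) :
    ThompsonClose (β ^ n * t₀) (x n) p := by
  induction n with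
  | zero => simpa using h₀
  | succ n ih =>
    rw [pow_succ', mul_assoc]
    exact hstep n _ (by positivity)
      (mul_le_of_le_one_left ht₀ (pow_le_one₀ hβ₀ hβ₁)) ih

end ThompsonClose

theorem exists_pos_geometric_bound {f : ℕ → ℝ} {L β : ℝ} (hβ₀ : 0 ≤ β) (hβ₁ : β < 1)
    (h : ∀ n, f (n + 1) ≤ L * β ^ n) :
    ∃ K > (0 : ℝ), ∃ r ∈ Set.Ioo (0 : ℝ) 1, ∀ n, 1 ≤ n → f n ≤ K * r ^ n := by
  set r := (1 + β) / 2 with hr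
  have hr₀ : 0 < r := by positivity
  refine ⟨(|L| + 1) / r, by positivity, r, ⟨hr₀, by linarith [hr]⟩, fun n hn => ?_⟩
  obtain ⟨k, rfl⟩ := Nat.exists_eq_add_of_le' hn
  calc f (k + 1) ≤ L * β ^ k := h k
    _ ≤ |L| * r ^ k := mul_le_mul (le_abs_self L)
        (pow_le_pow_left₀ hβ₀ (by linarith [hr]) k) (by positivity) (abs_nonneg L)
    _ ≤ (|L| + 1) * r ^ k := by gcongr; linarith
    _ = (|L| + 1) / r * r ^ (k + 1) := by field_simp; ring

section ContinuousFunctionalCalculus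

variable {A : Type*} [NormedRing A] [StarRing A] [NormedAlgebra ℝ A] [PartialOrder A]
  [StarOrderedRing A] [NonnegSpectrumClass ℝ A]
  [IsometricContinuousFunctionalCalculus ℝ A IsSelfAdjoint] {a b : A}

theorem IsSelfAdjoint.le_norm_smul_one (ha : IsSelfAdjoint a) : a ≤ ‖a‖ • (1 : A) := by
  rw [← Algebra.algebraMap_eq_smul_one]
  exact (le_algebraMap_iff_spectrum_le ha).2 fun x hx =>
    (le_abs_self x).trans (IsometricContinuousFunctionalCalculus.norm_spectrum_le a hx ha)

theorem IsSelfAdjoint.norm_le_of_neg_le_of_le (ha : IsSelfAdjoint a) {c : ℝ} (hc : 0 ≤ c)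
    (h₁ : -(c • 1) ≤ a) (h₂ : a ≤ c • (1 : A)) : ‖a‖ ≤ c := by
  rw [← Algebra.algebraMap_eq_smul_one, ← map_neg] at h₁
  rw [← Algebra.algebraMap_eq_smul_one] at h₂
  have hlo := (algebraMap_le_iff_le_spectrum ha).1 h₁
  have hhi := (le_algebraMap_iff_spectrum_le ha).1 h₂
  rw [← cfc_id' ℝ a]
  exact norm_cfc_le hc fun x hx => abs_le.2 ⟨hlo x hx, hhi x hx⟩

theorem ThompsonClose.norm_sub_le [StarModule ℝ A] {t : ℝ} (h : ThompsonClose t a b)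
    (ht : 0 ≤ t) (ha : IsSelfAdjoint a) (hb : 0 ≤ b) :
    ‖a - b‖ ≤ (Real.exp t - 1) * ‖b‖ := by
  set c := Real.exp t - 1
  have hc : 0 ≤ c := by linarith [Real.one_le_exp ht]
  have hexp : 1 - Real.exp (-t) ≤ c := by
    linarith [Real.add_one_le_exp t, Real.add_one_le_exp (-t)]
  have hcb : c • b ≤ (c * ‖b‖) • (1 : A) := by
    rw [mul_smul]
    exact smul_le_smul_of_nonneg_left (IsSelfAdjoint.of_nonneg hb).le_norm_smul_one hc
  refine (ha.sub (IsSelfAdjoint.of_nonneg hb)).norm_le_of_neg_le_of_le (by positivity) ?_ ?_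
  · calc -((c * ‖b‖) • 1) ≤ -(c • b) := neg_le_neg hcb
      _ ≤ -((1 - Real.exp (-t)) • b) := neg_le_neg (smul_le_smul_of_nonneg_right hexp hb)
      _ = Real.exp (-t) • b - b := by rw [sub_smul, one_smul, neg_sub]
      _ ≤ a - b := sub_le_sub_right h.exp_neg_smul_le b
  · calc a - b ≤ Real.exp t • b - b := sub_le_sub_right h.1 b
      _ = c • b := by rw [sub_smul, one_smul]
      _ ≤ (c * ‖b‖) • 1 := hcb

end ContinuousFunctionalCalculus

namespace Matrix

variable {ι : Type*} [Fintype ι] [DecidableEq ι]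

theorem PosDef.inv_le_inv_of_le {A B : Matrix ι ι ℝ} (hA : A.PosDef) (hAB : A ≤ B) :
    B⁻¹ ≤ A⁻¹ := by
  set D := B - A
  have hD : D.PosSemidef := hAB
  have hB : B.PosDef := by simpa [D] using hA.add_posSemidef hD
  have hAu := (A.isUnit_iff_isUnit_det).1 hA.isUnit
  have hBu := (B.isUnit_iff_isUnit_det).1 hB.isUnit
  have key : A⁻¹ - B⁻¹ = B⁻¹ᴴ * (D + Dᴴ * A⁻¹ * D) * B⁻¹ := by
    rw [hB.inv.isHermitian.eq, hD.isHermitian.eq]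
    simp only [D, mul_add, add_mul, mul_sub, sub_mul, mul_assoc, mul_nonsing_inv _ hBu,
      mul_nonsing_inv_cancel_left _ _ hAu, nonsing_inv_mul_cancel_left _ _ hAu,
      nonsing_inv_mul_cancel_left _ _ hBu, mul_one]
    abel
  rw [le_iff, key]
  exact (hD.add (hA.inv.posSemidef.conjTranspose_mul_mul_same D)).conjTranspose_mul_mul_same _

theorem PosDef.inv_le_smul_inv {X Y : Matrix ι ι ℝ} (hX : X.PosDef) (hY : Y.PosDef) {c : ℝ}
    (hc : 0 < c) (h : X ≤ c • Y) : Y⁻¹ ≤ c • X⁻¹ := by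
  have hinv : (c • Y)⁻¹ = c⁻¹ • Y⁻¹ :=
    inv_eq_left_inv (by simp [smul_smul, hc.ne', nonsing_inv_mul _ hY.det_pos.ne'.isUnit])
  have h' := smul_le_smul_of_nonneg_left (hX.inv_le_inv_of_le h) hc.le
  rwa [hinv, smul_inv_smul₀ hc.ne'] at h'

theorem PosDef.thompsonClose_inv {X Y : Matrix ι ι ℝ} {t : ℝ} (hX : X.PosDef) (hY : Y.PosDef)
    (h : ThompsonClose t X Y) : ThompsonClose t X⁻¹ Y⁻¹ :=
  ⟨hY.inv_le_smul_inv hX (Real.exp_pos t) h.2, hX.inv_le_smul_inv hY (Real.exp_pos t) h.1⟩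

theorem PosDef.thompsonClose_one {X : Matrix ι ι ℝ} (hX : X.PosDef) :
    ThompsonClose (max ‖X‖ ‖X⁻¹‖) X 1 := by
  have hle : ∀ {Y : Matrix ι ι ℝ}, Y.PosDef → ‖Y‖ ≤ max ‖X‖ ‖X⁻¹‖ →
      Y ≤ Real.exp (max ‖X‖ ‖X⁻¹‖) • 1 := fun hY hYt =>
    hY.isHermitian.isSelfAdjoint.le_norm_smul_one.trans <| smul_le_smul_of_nonneg_right
      (hYt.trans (by linarith [Real.add_one_le_exp (max ‖X‖ ‖X⁻¹‖)])) zero_le_one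
  refine ⟨hle hX (le_max_left _ _), ?_⟩
  simpa [nonsing_inv_nonsing_inv X hX.det_pos.ne'.isUnit] using
    hX.inv.inv_le_smul_inv PosDef.one (Real.exp_pos _) (hle hX.inv (le_max_right _ _))

noncomputable def kalmanCovStep (B S : Matrix ι ι ℝ) (α : ℝ) (X : Matrix ι ι ℝ) : Matrix ι ι ℝ :=
  (B + (α ^ 2 • X + S)⁻¹)⁻¹

variable {B S : Matrix ι ι ℝ} {α : ℝ}

theorem posDef_kalmanCovStep (hB : B.PosSemidef) (hS : S.PosDef) {X : Matrix ι ι ℝ}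
    (hX : X.PosSemidef) : (kalmanCovStep B S α X).PosDef :=
  (PosDef.posSemidef_add hB (PosDef.posSemidef_add (hX.smul (sq_nonneg α)) hS).inv).inv

theorem thompsonClose_kalmanCovStep (hB : B.PosSemidef) {s M t : ℝ} (hs : 0 < s)
    (hS : s • 1 ≤ S) (hM : 0 ≤ M) (ht : 0 ≤ t) {X Y : Matrix ι ι ℝ} (hX : X.PosSemidef)
    (hY : Y.PosSemidef) (hXM : X ≤ M • 1) (hYM : Y ≤ M • 1) (h : ThompsonClose t X Y) :
    ThompsonClose (α ^ 2 * M / (α ^ 2 * M + s) * t)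
      (kalmanCovStep B S α X) (kalmanCovStep B S α Y) := by
  have hSpd : S.PosDef := by
    simpa using (PosDef.one.smul hs).add_posSemidef (le_iff.1 hS)
  have hD {Z : Matrix ι ι ℝ} (hZ : Z.PosSemidef) : (α ^ 2 • Z + S).PosDef :=
    PosDef.posSemidef_add (hZ.smul (sq_nonneg α)) hSpd
  have hbound {Z : Matrix ι ι ℝ} (hZ : Z ≤ M • 1) : α ^ 2 • Z ≤ (α ^ 2 * M) • 1 := by
    rw [mul_smul]; exact smul_le_smul_of_nonneg_left hZ (sq_nonneg α)
  have hcontract := (h.smul (sq_nonneg α)).add_contract (by positivity) hs PosSemidef.one.nonneg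
    ht (hbound hXM) (hbound hYM) hS
  have hadd := ((hD hX).thompsonClose_inv (hD hY) hcontract).nonneg_add (by positivity) hB.nonneg
  have hE {Z : Matrix ι ι ℝ} (hZ : Z.PosSemidef) : (B + (α ^ 2 • Z + S)⁻¹).PosDef :=
    PosDef.posSemidef_add hB (hD hZ).inv
  exact (hE hX).thompsonClose_inv (hE hY) hadd

theorem PosDef.norm_inv_sub_inv_le {X Y : Matrix ι ι ℝ} {t : ℝ} (hX : X.PosDef) (hY : Y.PosDef)
    (ht : 0 ≤ t) (h : ThompsonClose t X Y) : ‖X⁻¹ - Y⁻¹‖ ≤ (Real.exp t - 1) * ‖Y⁻¹‖ :=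
  (hX.thompsonClose_inv hY h).norm_sub_le ht hX.inv.isHermitian.isSelfAdjoint
    hY.inv.posSemidef.nonneg

variable {C : ℕ → Matrix ι ι ℝ}

theorem posDef_succ_of_kalmanCovStep (hB : B.PosSemidef) (hS : S.PosDef) (hC0 : (C 0).PosSemidef)
    (hC : ∀ n, C (n + 1) = kalmanCovStep B S α (C n)) (n : ℕ) : (C (n + 1)).PosDef := by
  induction n with
  | zero => exact hC 0 ▸ posDef_kalmanCovStep hB hS hC0
  | succ n ih => exact hC (n + 1) ▸ posDef_kalmanCovStep hB hS ih.posSemidef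

theorem exists_thompsonClose_kalmanCovStep {Cinf : Matrix ι ι ℝ} (hB : B.PosSemidef)
    (hS : S.PosDef) (hCinf : Cinf.PosDef) (hfix : kalmanCovStep B S α Cinf = Cinf)
    (hC0 : (C 0).PosSemidef) (hC : ∀ n, C (n + 1) = kalmanCovStep B S α (C n)) :
    ∃ β t₀ : ℝ, 0 ≤ β ∧ β < 1 ∧ 0 ≤ t₀ ∧ ∀ n, ThompsonClose (β ^ n * t₀) (C (n + 1)) Cinf := by
  have hCpd := posDef_succ_of_kalmanCovStep hB hS hC0 hC
  set s := Real.exp (-max ‖S‖ ‖S⁻¹‖)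
  have hsS : s • 1 ≤ S := hS.thompsonClose_one.exp_neg_smul_le
  set t₀ := max ‖C 1‖ ‖(C 1)⁻¹‖ + max ‖Cinf‖ ‖Cinf⁻¹‖
  have ht₀ : 0 ≤ t₀ := by positivity
  have h₀ : ThompsonClose t₀ (C 1) Cinf :=
    (hCpd 0).thompsonClose_one.trans hCinf.thompsonClose_one.symm
  set M := Real.exp t₀ * ‖Cinf‖
  have hbound {X : Matrix ι ι ℝ} {t : ℝ} (ht : t ≤ t₀) (h : ThompsonClose t X Cinf) :
      X ≤ M • 1 :=
    calc X ≤ Real.exp t • Cinf := h.1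
      _ ≤ Real.exp t₀ • Cinf :=
        smul_le_smul_of_nonneg_right (Real.exp_le_exp.2 ht) hCinf.posSemidef.nonneg
      _ ≤ M • 1 := by
        rw [mul_smul]
        exact smul_le_smul_of_nonneg_left hCinf.isHermitian.isSelfAdjoint.le_norm_smul_one
          (Real.exp_pos t₀).le
  set β := α ^ 2 * M / (α ^ 2 * M + s)
  have hβ₁ : β < 1 := (div_lt_one (by positivity)).2 (by linarith [Real.exp_pos (-max ‖S‖ ‖S⁻¹‖)])
  refine ⟨β, t₀, by positivity, hβ₁, ht₀, ThompsonClose.pow_mul_of_step (x := fun n => C (n + 1))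
    (by positivity) hβ₁.le ht₀ h₀ fun n t ht htt₀ h => ?_⟩
  rw [← hfix, hC (n + 1)]
  exact thompsonClose_kalmanCovStep hB (Real.exp_pos _) hsS (by positivity) ht
    (hCpd n).posSemidef hCinf.posSemidef (hbound htt₀ h) (hbound ht₀ (.refl Cinf)) h

end Matrix

theorem kalman_covariance_exponential_convergence_general
    {Nθ Ny : ℕ}
    (G : Matrix (Fin Ny) (Fin Nθ) ℝ)
    (Sν : Matrix (Fin Ny) (Fin Ny) ℝ) (hSν : Sν.PosDef)
    (Sω : Matrix (Fin Nθ) (Fin Nθ) ℝ) (hSω : Sω.PosDef)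
    (α : ℝ)
    (Cinf : Matrix (Fin Nθ) (Fin Nθ) ℝ) (hCinf : Cinf.PosDef)
    (hfix : Cinf⁻¹ = Gᵀ * Sν⁻¹ * G + (α ^ 2 • Cinf + Sω)⁻¹)
    (C : ℕ → Matrix (Fin Nθ) (Fin Nθ) ℝ) (hC0 : (C 0).PosSemidef)
    (hCrec : ∀ n, C (n + 1) = (Gᵀ * Sν⁻¹ * G + (α ^ 2 • C n + Sω)⁻¹)⁻¹) :
    (∀ n, 1 ≤ n → (C n).PosDef) ∧
      ∃ K > (0 : ℝ), ∃ r ∈ Set.Ioo (0 : ℝ) 1,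
        ∀ n, 1 ≤ n → ‖(C n)⁻¹ - Cinf⁻¹‖ ≤ K * r ^ n := by
  have hB : (Gᵀ * Sν⁻¹ * G).PosSemidef := by
    simpa using hSν.inv.posSemidef.conjTranspose_mul_mul_same G
  have hfix' : kalmanCovStep (Gᵀ * Sν⁻¹ * G) Sω α Cinf = Cinf := by
    rw [kalmanCovStep, ← hfix, nonsing_inv_nonsing_inv _ hCinf.det_pos.ne'.isUnit]
  have hCpd := posDef_succ_of_kalmanCovStep hB hSω hC0 hCrec
  obtain ⟨β, t₀, hβ₀, hβ₁, ht₀, hclose⟩ :=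
    exists_thompsonClose_kalmanCovStep hB hSω hCinf hfix' hC0 hCrec
  refine ⟨fun n hn => ?_,
    exists_pos_geometric_bound (L := t₀ * Real.exp t₀ * ‖Cinf⁻¹‖) hβ₀ hβ₁ fun n => ?_⟩
  · obtain ⟨k, rfl⟩ := Nat.exists_eq_add_of_le' hn
    exact hCpd k
  · have htn : β ^ n * t₀ ≤ t₀ := mul_le_of_le_one_left ht₀ (pow_le_one₀ hβ₀ hβ₁.le)
    calc ‖(C (n + 1))⁻¹ - Cinf⁻¹‖ ≤ (Real.exp (β ^ n * t₀) - 1) * ‖Cinf⁻¹‖ :=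
          (hCpd n).norm_inv_sub_inv_le hCinf (by positivity) (hclose n)
      _ ≤ β ^ n * t₀ * Real.exp t₀ * ‖Cinf⁻¹‖ := by
          gcongr
          exact Real.exp_sub_one_le_mul_exp (by positivity) htn
      _ = t₀ * Real.exp t₀ * ‖Cinf⁻¹‖ * β ^ n := by ring

/-- Assume either `α ∈ (0,1)`, or `α = 1` and `Gᵀ Sν⁻¹ G` is positive
definite. Let `Cinf` be the (unique) positive definite solution of
`Cinf⁻¹ = Gᵀ Sν⁻¹ G + (α² Cinf + Sω)⁻¹`. Then for every symmetric positive
semidefinite initial matrix `C 0`, the covariance sequence of the Kalman iteration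
`C (n+1) ⁻¹ = Gᵀ Sν⁻¹ G + (α² C n + Sω)⁻¹` converges to `Cinf` exponentially fast:
each `C n` (`n ≥ 1`) is positive definite and there exist `K > 0` and `r ∈ (0,1)`
such that `‖(C n)⁻¹ − Cinf⁻¹‖ ≤ K rⁿ` for all `n ≥ 1` (operator norm induced by the
Euclidean norm). -/
theorem kalman_covariance_exponential_convergence
    {Nθ Ny : ℕ} (hNθ : 0 < Nθ) (hNy : 0 < Ny)
    (G : Matrix (Fin Ny) (Fin Nθ) ℝ)
    (Sν : Matrix (Fin Ny) (Fin Ny) ℝ) (hSν : Sν.PosDef)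
    (Sω : Matrix (Fin Nθ) (Fin Nθ) ℝ) (hSω : Sω.PosDef)
    (α : ℝ) (hα : 0 < α)
    (hcase : α < 1 ∨ (α = 1 ∧ (Gᵀ * Sν⁻¹ * G).PosDef))
    (Cinf : Matrix (Fin Nθ) (Fin Nθ) ℝ) (hCinf : Cinf.PosDef)
    (hfix : Cinf⁻¹ = Gᵀ * Sν⁻¹ * G + (α ^ 2 • Cinf + Sω)⁻¹)
    (C : ℕ → Matrix (Fin Nθ) (Fin Nθ) ℝ) (hC0 : (C 0).PosSemidef)
    (hCrec : ∀ n, C (n + 1) = (Gᵀ * Sν⁻¹ * G + (α ^ 2 • C n + Sω)⁻¹)⁻¹) :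
    (∀ n, 1 ≤ n → (C n).PosDef) ∧
      ∃ K > (0 : ℝ), ∃ r ∈ Set.Ioo (0 : ℝ) 1,
        ∀ n, 1 ≤ n → ‖(C n)⁻¹ - Cinf⁻¹‖ ≤ K * r ^ n :=
  kalman_covariance_exponential_convergence_general G Sν hSν Sω hSω α Cinf hCinf hfix C hC0 hCrec
end

section
/- Let α ∈ (0,1), let C_∞ be a symmetric positive definite matrix satisfying C_∞⁻¹ = GᵀΣ_ν⁻¹G + (α²C_∞ + Σ_ω)⁻¹, set Ĉ_∞ = α²C_∞ + Σ_ω, and let m_∞ satisfy C_∞⁻¹ m_∞ = GᵀΣ_ν⁻¹y + Ĉ_∞⁻¹(α m_∞ + (1−α) r_0). Then m_∞ satisfies GᵀΣ_ν⁻¹(y − G m_∞) = (1−α) Ĉ_∞⁻¹(m_∞ − r_0), and consequently m_∞ is the unique minimizer over θ ∈ ℝ^{N_θ} of the Tikhonov-regularized least squares functional Φ_R(θ) = ½‖Σ_ν^{-1/2}(y − Gθ)‖² + ((1−α)/2)‖Ĉ_∞^{-1/2}(θ − r_0)‖². -/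
/-!
Rewriting `Cinf⁻¹` in the fixed-point equation for the mean by the fixed-point equation for the
covariance and cancelling `Chat⁻¹ minf` leaves exactly the normal equation
`Gᵀ Sν⁻¹ (y - G minf) = (1 - α) Chat⁻¹ (minf - r₀)` of the Tikhonov functional. That functional is
a quadratic, so expanding it around a solution `minf` of its normal equation kills the linear
term: `ΦR (minf + d) = ΦR minf + ½ (G d)ᵀ Sν⁻¹ (G d) + (1 - α)/2 dᵀ Chat⁻¹ d`, and the last term
is positive for `d ≠ 0`.
-/

open Matrix

section PosSemidefSqrt

open scoped ComplexOrder

/-- The positive semidefinite square root of a positive semidefinite matrix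
(the definition `Matrix.PosSemidef.sqrt` of the older Mathlib, since removed). -/
noncomputable def Matrix.PosSemidef.sqrt {n 𝕜 : Type*} [Fintype n] [DecidableEq n] [RCLike 𝕜]
    {A : Matrix n n 𝕜} (hA : A.PosSemidef) : Matrix n n 𝕜 :=
  (hA.1.eigenvectorUnitary : Matrix n n 𝕜) * diagonal ((↑) ∘ (√·) ∘ hA.1.eigenvalues) *
    (star hA.1.eigenvectorUnitary : Matrix n n 𝕜)

end PosSemidefSqrt

namespace Matrix.PosSemidef

open scoped ComplexOrder

variable {n 𝕜 : Type*} [Fintype n] [DecidableEq n] [RCLike 𝕜] {A : Matrix n n 𝕜}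

lemma sqrt_mul_self (hA : A.PosSemidef) : hA.sqrt * hA.sqrt = A := by
  have hU : star (hA.1.eigenvectorUnitary : Matrix n n 𝕜) * hA.1.eigenvectorUnitary = 1 :=
    Unitary.star_mul_self_of_mem hA.1.eigenvectorUnitary.2
  have hD : diagonal ((RCLike.ofReal : ℝ → 𝕜) ∘ (√·) ∘ hA.1.eigenvalues) *
      diagonal ((RCLike.ofReal : ℝ → 𝕜) ∘ (√·) ∘ hA.1.eigenvalues) =
      diagonal ((RCLike.ofReal : ℝ → 𝕜) ∘ hA.1.eigenvalues) := by
    rw [diagonal_mul_diagonal]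
    congr 1
    funext i
    simp [← RCLike.ofReal_mul, Real.mul_self_sqrt (hA.eigenvalues_nonneg i)]
  conv_rhs => rw [hA.1.spectral_theorem, Unitary.conjStarAlgAut_apply]
  simp only [sqrt, Matrix.mul_assoc]
  rw [← Matrix.mul_assoc (star _) _ (diagonal _ * _), hU, Matrix.one_mul,
    ← Matrix.mul_assoc (diagonal _) (diagonal _), hD]

lemma isHermitian_sqrt (hA : A.PosSemidef) : hA.sqrt.IsHermitian := by
  rw [sqrt, star_eq_conjTranspose]
  refine isHermitian_mul_mul_conjTranspose _ (isHermitian_diagonal_of_self_adjoint _ ?_)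
  funext i
  simp

end Matrix.PosSemidef

lemma Matrix.PosSemidef.norm_sq_toLp_sqrt_inv_mulVec {n : Type*} [Fintype n] [DecidableEq n]
    {A : Matrix n n ℝ} (hA : A.PosSemidef) (v : n → ℝ) :
    ‖WithLp.toLp 2 (hA.sqrt⁻¹ *ᵥ v)‖ ^ 2 = v ⬝ᵥ A⁻¹ *ᵥ v := by
  have hsymm : (hA.sqrt⁻¹)ᵀ = hA.sqrt⁻¹ := by
    rw [transpose_nonsing_inv, (isHermitian_iff_isSymm.mp hA.isHermitian_sqrt).eq]
  have hinv : A⁻¹ = hA.sqrt⁻¹ * hA.sqrt⁻¹ := by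
    rw [← Matrix.mul_inv_rev, hA.sqrt_mul_self]
  rw [← real_inner_self_eq_norm_sq, EuclideanSpace.inner_toLp_toLp, star_trivial,
    dotProduct_mulVec, ← mulVec_transpose, hsymm, mulVec_mulVec, dotProduct_comm, hinv]

lemma Matrix.IsSymm.add_dotProduct_mulVec_add {n R : Type*} [Fintype n] [CommRing R]
    {P : Matrix n n R} (hP : P.IsSymm) (a b : n → R) :
    (a + b) ⬝ᵥ P *ᵥ (a + b) = a ⬝ᵥ P *ᵥ a + 2 * (b ⬝ᵥ P *ᵥ a) + b ⬝ᵥ P *ᵥ b := by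
  have hcomm : a ⬝ᵥ P *ᵥ b = b ⬝ᵥ P *ᵥ a := by
    rw [← dotProduct_transpose_mulVec, hP.eq]
  simp only [mulVec_add, dotProduct_add, add_dotProduct, hcomm]
  ring

lemma normal_eq_of_kalman_fixed_point {m n R : Type*} [Fintype m] [Fintype n] [CommRing R]
    {G : Matrix m n R} {W : Matrix n m R} {P : Matrix n n R} {y : m → R} {r θ : n → R} {α : R}
    (h : (W * G + P) *ᵥ θ = W *ᵥ y + P *ᵥ (α • θ + (1 - α) • r)) :
    W *ᵥ (y - G *ᵥ θ) = (1 - α) • P *ᵥ (θ - r) := by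
  rw [add_mulVec, ← mulVec_mulVec] at h
  have hres : θ - (α • θ + (1 - α) • r) = (1 - α) • (θ - r) := by module
  rw [mulVec_sub, ← mulVec_smul, ← hres, mulVec_sub]
  linear_combination (norm := module) -h

section Tikhonov

variable {m n : Type*} [Fintype m] [Fintype n]

noncomputable def tikhonovObjective (G : Matrix m n ℝ) (P : Matrix m m ℝ) (R : Matrix n n ℝ)
    (β : ℝ) (y : m → ℝ) (r θ : n → ℝ) : ℝ :=
  (1 / 2) * ((y - G *ᵥ θ) ⬝ᵥ P *ᵥ (y - G *ᵥ θ)) + (β / 2) * ((θ - r) ⬝ᵥ R *ᵥ (θ - r))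

variable {G : Matrix m n ℝ} {P : Matrix m m ℝ} {R : Matrix n n ℝ} {β : ℝ} {y : m → ℝ}
  {r θ : n → ℝ}

lemma tikhonovObjective_add_of_normal_eq (hP : P.IsSymm) (hR : R.IsSymm)
    (h : (Gᵀ * P) *ᵥ (y - G *ᵥ θ) = β • R *ᵥ (θ - r)) (d : n → ℝ) :
    tikhonovObjective G P R β y r (θ + d) = tikhonovObjective G P R β y r θ +
      (1 / 2) * (G *ᵥ d ⬝ᵥ P *ᵥ G *ᵥ d) + (β / 2) * (d ⬝ᵥ R *ᵥ d) := by
  have hcross : G *ᵥ d ⬝ᵥ P *ᵥ (y - G *ᵥ θ) = β * (d ⬝ᵥ R *ᵥ (θ - r)) := by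
    rw [dotProduct_comm, ← dotProduct_transpose_mulVec, mulVec_mulVec, h,
      dotProduct_smul, smul_eq_mul]
  have hy : y - G *ᵥ (θ + d) = (y - G *ᵥ θ) + -(G *ᵥ d) := by rw [mulVec_add]; abel
  have hr : θ + d - r = (θ - r) + d := by abel
  simp only [tikhonovObjective, hy, hr, hP.add_dotProduct_mulVec_add,
    hR.add_dotProduct_mulVec_add, neg_dotProduct, mulVec_neg, dotProduct_neg, neg_neg, hcross]
  ring

lemma tikhonovObjective_lt_of_normal_eq (hP : P.PosSemidef) (hR : R.PosDef) (hβ : 0 < β)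
    (h : (Gᵀ * P) *ᵥ (y - G *ᵥ θ) = β • R *ᵥ (θ - r)) {θ' : n → ℝ} (hθ' : θ' ≠ θ) :
    tikhonovObjective G P R β y r θ < tikhonovObjective G P R β y r θ' := by
  obtain ⟨d, rfl⟩ : ∃ d, θ' = θ + d := ⟨θ' - θ, by abel⟩
  rw [tikhonovObjective_add_of_normal_eq (isHermitian_iff_isSymm.mp hP.isHermitian)
    (isHermitian_iff_isSymm.mp hR.isHermitian) h]
  have hGd := hP.dotProduct_mulVec_nonneg (G *ᵥ d)
  have hd := hR.dotProduct_mulVec_pos (x := d) (by rintro rfl; simp at hθ')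
  simp only [star_trivial] at hGd hd
  nlinarith

end Tikhonov

theorem kalman_limit_mean_is_tikhonov_minimizer_general
    {Nθ Ny : ℕ}
    (G : Matrix (Fin Ny) (Fin Nθ) ℝ)
    (y : EuclideanSpace ℝ (Fin Ny)) (r₀ : EuclideanSpace ℝ (Fin Nθ))
    (Sν : Matrix (Fin Ny) (Fin Ny) ℝ) (hSν : Sν.PosDef)
    (Sω : Matrix (Fin Nθ) (Fin Nθ) ℝ)
    (α : ℝ) (hα : α ∈ Set.Ioo (0 : ℝ) 1)
    (Cinf : Matrix (Fin Nθ) (Fin Nθ) ℝ)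
    (hfix : Cinf⁻¹ = Gᵀ * Sν⁻¹ * G + (α ^ 2 • Cinf + Sω)⁻¹)
    (Chat : Matrix (Fin Nθ) (Fin Nθ) ℝ) (hChat : Chat = α ^ 2 • Cinf + Sω)
    (hChatPD : Chat.PosDef)
    (minf : EuclideanSpace ℝ (Fin Nθ))
    (hminf : Cinf⁻¹ *ᵥ minf =
      (Gᵀ * Sν⁻¹) *ᵥ y + Chat⁻¹ *ᵥ (α • minf + (1 - α) • r₀))
    (ΦR : EuclideanSpace ℝ (Fin Nθ) → ℝ)
    (hΦR : ∀ θ : EuclideanSpace ℝ (Fin Nθ), ΦR θ =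
      (1 / 2) *
        ‖show EuclideanSpace ℝ (Fin Ny) from WithLp.toLp 2
            (hSν.posSemidef.sqrt⁻¹ *ᵥ (y - show EuclideanSpace ℝ (Fin Ny) from WithLp.toLp 2 (G *ᵥ θ)))‖ ^ 2 +
      ((1 - α) / 2) *
        ‖show EuclideanSpace ℝ (Fin Nθ) from WithLp.toLp 2 (hChatPD.posSemidef.sqrt⁻¹ *ᵥ (θ - r₀))‖ ^ 2) :
    ((Gᵀ * Sν⁻¹) *ᵥ (y - show EuclideanSpace ℝ (Fin Ny) from WithLp.toLp 2 (G *ᵥ minf)) =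
        (1 - α) • (Chat⁻¹ *ᵥ (minf - r₀))) ∧
      (∀ θ : EuclideanSpace ℝ (Fin Nθ), θ ≠ minf → ΦR minf < ΦR θ) := by
  rw [hfix, ← hChat] at hminf
  have hnormal := normal_eq_of_kalman_fixed_point (by simpa using hminf)
  have hΦR' (θ : EuclideanSpace ℝ (Fin Nθ)) :
      ΦR θ = tikhonovObjective G Sν⁻¹ Chat⁻¹ (1 - α) y r₀ θ := by
    rw [hΦR, hSν.posSemidef.norm_sq_toLp_sqrt_inv_mulVec,
      hChatPD.posSemidef.norm_sq_toLp_sqrt_inv_mulVec, tikhonovObjective]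
  refine ⟨by simpa using hnormal, fun θ hθ => ?_⟩
  rw [hΦR', hΦR']
  exact tikhonovObjective_lt_of_normal_eq hSν.posSemidef.inv hChatPD.inv (sub_pos.2 hα.2)
    hnormal ((WithLp.ofLp_injective 2).ne hθ)

/-- Let `α ∈ (0,1)`, let `Cinf` be a symmetric positive definite
matrix satisfying `Cinf⁻¹ = Gᵀ Sν⁻¹ G + (α² Cinf + Sω)⁻¹`, set
`Chat = α² Cinf + Sω`, and let `minf` satisfy
`Cinf⁻¹ minf = Gᵀ Sν⁻¹ y + Chat⁻¹ (α minf + (1−α) r₀)`. Then `minf` satisfies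
`Gᵀ Sν⁻¹ (y − G minf) = (1−α) Chat⁻¹ (minf − r₀)`, and consequently `minf` is the
unique minimizer of the Tikhonov-regularized least squares functional
`Φ_R(θ) = ½‖Sν^{-1/2}(y − Gθ)‖² + ((1−α)/2)‖Chat^{-1/2}(θ − r₀)‖²`. -/
theorem kalman_limit_mean_is_tikhonov_minimizer
    {Nθ Ny : ℕ} (hNθ : 0 < Nθ) (hNy : 0 < Ny)
    (G : Matrix (Fin Ny) (Fin Nθ) ℝ)
    (y : EuclideanSpace ℝ (Fin Ny)) (r₀ : EuclideanSpace ℝ (Fin Nθ))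
    (Sν : Matrix (Fin Ny) (Fin Ny) ℝ) (hSν : Sν.PosDef)
    (Sω : Matrix (Fin Nθ) (Fin Nθ) ℝ) (hSω : Sω.PosDef)
    (α : ℝ) (hα : α ∈ Set.Ioo (0 : ℝ) 1)
    (Cinf : Matrix (Fin Nθ) (Fin Nθ) ℝ) (hCinf : Cinf.PosDef)
    (hfix : Cinf⁻¹ = Gᵀ * Sν⁻¹ * G + (α ^ 2 • Cinf + Sω)⁻¹)
    (Chat : Matrix (Fin Nθ) (Fin Nθ) ℝ) (hChat : Chat = α ^ 2 • Cinf + Sω)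
    (hChatPD : Chat.PosDef)
    (minf : EuclideanSpace ℝ (Fin Nθ))
    (hminf : Cinf⁻¹ *ᵥ minf =
      (Gᵀ * Sν⁻¹) *ᵥ y + Chat⁻¹ *ᵥ (α • minf + (1 - α) • r₀))
    (ΦR : EuclideanSpace ℝ (Fin Nθ) → ℝ)
    (hΦR : ∀ θ : EuclideanSpace ℝ (Fin Nθ), ΦR θ =
      (1 / 2) *
        ‖show EuclideanSpace ℝ (Fin Ny) from WithLp.toLp 2
            (hSν.posSemidef.sqrt⁻¹ *ᵥ (y - show EuclideanSpace ℝ (Fin Ny) from WithLp.toLp 2 (G *ᵥ θ)))‖ ^ 2 +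
      ((1 - α) / 2) *
        ‖show EuclideanSpace ℝ (Fin Nθ) from WithLp.toLp 2 (hChatPD.posSemidef.sqrt⁻¹ *ᵥ (θ - r₀))‖ ^ 2) :
    ((Gᵀ * Sν⁻¹) *ᵥ (y - show EuclideanSpace ℝ (Fin Ny) from WithLp.toLp 2 (G *ᵥ minf)) =
        (1 - α) • (Chat⁻¹ *ᵥ (minf - r₀))) ∧
      (∀ θ : EuclideanSpace ℝ (Fin Nθ), θ ≠ minf → ΦR minf < ΦR θ) :=
  kalman_limit_mean_is_tikhonov_minimizer_general G y r₀ Sν hSν Sω α hα Cinf hfix Chat hChat hChatPD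
    minf hminf ΦR hΦR
end

section
/- Let α ∈ (0,1) and let C_∞ be a symmetric positive definite matrix satisfying C_∞⁻¹ = GᵀΣ_ν⁻¹G + (α²C_∞ + Σ_ω)⁻¹, and set Ĉ_∞ = α²C_∞ + Σ_ω. Then Σ_ω ⪯ Ĉ_∞ and (1−α²) Ĉ_∞ ⪯ Σ_ω, i.e. Σ_ω ⪯ Ĉ_∞ ⪯ Σ_ω/(1−α²). -/
open Matrix

/-! Subtracting `Σ_ω` from `Ĉ_∞` leaves `α² C_∞ ⪰ 0`. For the other bound, the fixed-point
equation says `C_∞⁻¹ - Ĉ_∞⁻¹ = Gᵀ Σ_ν⁻¹ G ⪰ 0`; matrix inversion is order-reversing on positive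
definite matrices, so `C_∞ ⪯ Ĉ_∞`, and `Σ_ω - (1 - α²) Ĉ_∞ = α² (Ĉ_∞ - C_∞) ⪰ 0`. -/

/-- Both differences are Schur complements of the block matrix `[B 1; 1 A⁻¹]`. -/
theorem Matrix.PosDef.inv_sub_inv_posSemidef_iff {n K : Type*} [Fintype n] [DecidableEq n]
    [Field K] [PartialOrder K] [StarRing K] [StarOrderedRing K]
    {A B : Matrix n n K} (hA : A.PosDef) (hB : B.PosDef) :
    (A⁻¹ - B⁻¹).PosSemidef ↔ (B - A).PosSemidef := by
  let _ := hA.isUnit.invertible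
  let _ := hB.isUnit.invertible
  let _ := hA.inv.isUnit.invertible
  have h₁₁ := PosDef.fromBlocks₁₁ (1 : Matrix n n K) A⁻¹ hB
  have h₂₂ := PosDef.fromBlocks₂₂ B (1 : Matrix n n K) hA.inv
  simp only [conjTranspose_one, Matrix.one_mul, Matrix.mul_one, inv_inv_of_invertible] at h₁₁ h₂₂
  exact h₁₁.symm.trans h₂₂

theorem steady_state_covariance_bounds_general
    {Nθ Ny : ℕ}
    (G : Matrix (Fin Ny) (Fin Nθ) ℝ)
    (Sν : Matrix (Fin Ny) (Fin Ny) ℝ) (hSν : Sν.PosDef)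
    (Sω : Matrix (Fin Nθ) (Fin Nθ) ℝ) (hSω : Sω.PosDef)
    (α : ℝ)
    (Cinf : Matrix (Fin Nθ) (Fin Nθ) ℝ) (hCinf : Cinf.PosDef)
    (hfix : Cinf⁻¹ = Gᵀ * Sν⁻¹ * G + (α ^ 2 • Cinf + Sω)⁻¹)
    (Chat : Matrix (Fin Nθ) (Fin Nθ) ℝ) (hChat : Chat = α ^ 2 • Cinf + Sω) :
    (Chat - Sω).PosSemidef ∧ (Sω - (1 - α ^ 2) • Chat).PosSemidef := by
  have hα2 : (0 : ℝ) ≤ α ^ 2 := sq_nonneg α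
  have hChat_posDef : Chat.PosDef :=
    hChat ▸ PosDef.posSemidef_add (hCinf.posSemidef.smul hα2) hSω
  have hinv : (Cinf⁻¹ - Chat⁻¹).PosSemidef := by
    rw [hfix, ← hChat, add_sub_cancel_right]
    exact hSν.inv.posSemidef.conjTranspose_mul_mul_same G
  have hCinf_le : (Chat - Cinf).PosSemidef :=
    (hCinf.inv_sub_inv_posSemidef_iff hChat_posDef).mp hinv
  constructor
  · rw [hChat, add_sub_cancel_right]
    exact hCinf.posSemidef.smul hα2
  · convert hCinf_le.smul hα2 using 1
    rw [hChat]
    module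

/-- Let `α ∈ (0,1)` and let `Cinf` be a symmetric positive definite
matrix satisfying `Cinf⁻¹ = Gᵀ Sν⁻¹ G + (α² Cinf + Sω)⁻¹`, and set
`Chat = α² Cinf + Sω`. Then `Sω ⪯ Chat` and `(1 − α²) Chat ⪯ Sω`,
i.e. `Sω ⪯ Chat ⪯ Sω / (1 − α²)`. -/
theorem steady_state_covariance_bounds
    {Nθ Ny : ℕ} (hNθ : 0 < Nθ) (hNy : 0 < Ny)
    (G : Matrix (Fin Ny) (Fin Nθ) ℝ)
    (Sν : Matrix (Fin Ny) (Fin Ny) ℝ) (hSν : Sν.PosDef)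
    (Sω : Matrix (Fin Nθ) (Fin Nθ) ℝ) (hSω : Sω.PosDef)
    (α : ℝ) (hα : α ∈ Set.Ioo (0 : ℝ) 1)
    (Cinf : Matrix (Fin Nθ) (Fin Nθ) ℝ) (hCinf : Cinf.PosDef)
    (hfix : Cinf⁻¹ = Gᵀ * Sν⁻¹ * G + (α ^ 2 • Cinf + Sω)⁻¹)
    (Chat : Matrix (Fin Nθ) (Fin Nθ) ℝ) (hChat : Chat = α ^ 2 • Cinf + Sω) :
    (Chat - Sω).PosSemidef ∧ (Sω - (1 - α ^ 2) • Chat).PosSemidef :=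
  steady_state_covariance_bounds_general G Sν hSν Sω hSω α Cinf hCinf hfix Chat hChat
end

section
/- Suppose Σ_η ∈ ℝ^{N_y×N_y} is symmetric positive definite, GᵀΣ_η⁻¹G is positive definite, and define C_* = (GᵀΣ_η⁻¹G)⁻¹. For any α ∈ (0,1], if one chooses Σ_ν = 2Σ_η and Σ_ω = (2 − α²) C_*, then C_* solves the steady-state covariance equation: C_*⁻¹ = GᵀΣ_ν⁻¹G + (α²C_* + Σ_ω)⁻¹, and moreover α²C_* + Σ_ω = 2C_*. -/
open Matrix

/-- No invertibility of `A` is needed: for singular `A` both sides are the junk value `0`. -/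
theorem Matrix.inv_smul_of_ne_zero {n K : Type*} [Fintype n] [DecidableEq n] [Field K]
    {k : K} (hk : k ≠ 0) (A : Matrix n n K) : (k • A)⁻¹ = k⁻¹ • A⁻¹ := by
  by_cases hA : IsUnit A.det
  · exact inv_smul' _ (Units.mk0 k hk) hA
  · have hkA : ¬IsUnit (k • A).det := by
      rwa [det_smul, IsUnit.mul_iff, not_and_or, or_iff_right (by simpa using pow_ne_zero _ hk)]
    rw [nonsing_inv_apply_not_isUnit _ hA, nonsing_inv_apply_not_isUnit _ hkA, smul_zero]

theorem steady_state_covariance_explicit_solution_general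
    {Nθ Ny : ℕ}
    (G : Matrix (Fin Ny) (Fin Nθ) ℝ)
    (Sη : Matrix (Fin Ny) (Fin Ny) ℝ)
    (hGG : (Gᵀ * Sη⁻¹ * G).PosDef)
    (Cstar : Matrix (Fin Nθ) (Fin Nθ) ℝ) (hCstar : Cstar = (Gᵀ * Sη⁻¹ * G)⁻¹)
    (α : ℝ)
    (Sν : Matrix (Fin Ny) (Fin Ny) ℝ) (hSν : Sν = (2 : ℝ) • Sη)
    (Sω : Matrix (Fin Nθ) (Fin Nθ) ℝ) (hSω : Sω = (2 - α ^ 2) • Cstar) :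
    Cstar⁻¹ = Gᵀ * Sν⁻¹ * G + (α ^ 2 • Cstar + Sω)⁻¹ ∧
      α ^ 2 • Cstar + Sω = (2 : ℝ) • Cstar := by
  have hsum : α ^ 2 • Cstar + Sω = (2 : ℝ) • Cstar := by
    rw [hSω, ← add_smul, add_sub_cancel]
  refine ⟨?_, hsum⟩
  have hCinv : Cstar⁻¹ = Gᵀ * Sη⁻¹ * G :=
    hCstar ▸ nonsing_inv_nonsing_inv _ ((isUnit_iff_isUnit_det _).mp hGG.isUnit)
  rw [hsum, hSν, inv_smul_of_ne_zero two_ne_zero, inv_smul_of_ne_zero two_ne_zero, hCinv,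
    Matrix.mul_smul, Matrix.smul_mul, ← add_smul, ← two_mul,
    mul_inv_cancel₀ two_ne_zero, one_smul]

/-- Suppose `Sη` is symmetric positive definite, `Gᵀ Sη⁻¹ G` is
positive definite, and define `Cstar = (Gᵀ Sη⁻¹ G)⁻¹`. For any `α ∈ (0,1]`, if one
chooses `Sν = 2 Sη` and `Sω = (2 − α²) Cstar`, then `Cstar` solves the steady-state
covariance equation `Cstar⁻¹ = Gᵀ Sν⁻¹ G + (α² Cstar + Sω)⁻¹`, and moreover
`α² Cstar + Sω = 2 Cstar`. -/
theorem steady_state_covariance_explicit_solution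
    {Nθ Ny : ℕ} (hNθ : 0 < Nθ) (hNy : 0 < Ny)
    (G : Matrix (Fin Ny) (Fin Nθ) ℝ)
    (Sη : Matrix (Fin Ny) (Fin Ny) ℝ) (hSη : Sη.PosDef)
    (hGG : (Gᵀ * Sη⁻¹ * G).PosDef)
    (Cstar : Matrix (Fin Nθ) (Fin Nθ) ℝ) (hCstar : Cstar = (Gᵀ * Sη⁻¹ * G)⁻¹)
    (α : ℝ) (hα : α ∈ Set.Ioc (0 : ℝ) 1)
    (Sν : Matrix (Fin Ny) (Fin Ny) ℝ) (hSν : Sν = (2 : ℝ) • Sη)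
    (Sω : Matrix (Fin Nθ) (Fin Nθ) ℝ) (hSω : Sω = (2 - α ^ 2) • Cstar) :
    Cstar⁻¹ = Gᵀ * Sν⁻¹ * G + (α ^ 2 • Cstar + Sω)⁻¹ ∧
      α ^ 2 • Cstar + Sω = (2 : ℝ) • Cstar :=
  steady_state_covariance_explicit_solution_general G Sη hGG Cstar hCstar α Sν hSν Sω hSω
end

section
/- Let α ∈ (0,1], let Σ_ν and Σ_ω be symmetric positive definite, let C_0 be symmetric positive semidefinite, and define C_{n+1} by C_{n+1}⁻¹ = GᵀΣ_ν⁻¹G + (α²C_n + Σ_ω)⁻¹. Then for every n ≥ 1, C_n is positive definite and the precision matrices satisfy the uniform two-sided bound GᵀΣ_ν⁻¹G ⪯ C_n⁻¹ ⪯ GᵀΣ_ν⁻¹G + Σ_ω⁻¹. -/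
/-!
Write `K = Gᵀ Sν⁻¹ G ⪰ 0`. Each `C n` is positive semidefinite by induction, so the prior
covariance `α² C n + Sω` is positive definite and `C (n+1)⁻¹ = K + (α² C n + Sω)⁻¹` is positive
definite, which gives the lower bound. The upper bound is antitonicity of the inverse,
`(α² C n + Sω)⁻¹ ⪯ Sω⁻¹`.
-/

open Matrix
open scoped ComplexOrder

namespace Matrix.PosDef

variable {n 𝕜 : Type*} [Fintype n] [DecidableEq n] [RCLike 𝕜]

/-- With `E = D + S`, one has `E⁻¹ (D + D S⁻¹ D) E⁻¹ = S⁻¹ - E⁻¹`. -/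
theorem posSemidef_inv_sub_inv_add {S D : Matrix n n 𝕜} (hS : S.PosDef) (hD : D.PosSemidef) :
    (S⁻¹ - (D + S)⁻¹).PosSemidef := by
  set E := D + S
  have hE : E.PosDef := PosDef.posSemidef_add hD hS
  have hSu : IsUnit S.det := (isUnit_iff_isUnit_det S).mp hS.isUnit
  have hEu : IsUnit E.det := (isUnit_iff_isUnit_det E).mp hE.isUnit
  have hDE : D = E - S := (add_sub_cancel_right D S).symm
  have hquad : D + D * S⁻¹ * D = E * S⁻¹ * E - E := by
    rw [hDE]
    simp only [sub_mul, mul_sub, nonsing_inv_mul_cancel_right _ _ hSu, mul_nonsing_inv S hSu,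
      one_mul]
    abel
  have hconj : E⁻¹ * (E * S⁻¹ * E - E) * E⁻¹ = S⁻¹ - E⁻¹ := by
    rw [mul_sub, sub_mul, ← mul_assoc, ← mul_assoc, nonsing_inv_mul E hEu, one_mul,
      mul_nonsing_inv_cancel_right _ _ hEu, one_mul]
  have hpsd : (D + D * S⁻¹ * D).PosSemidef := by
    simpa only [hD.isHermitian.eq] using hD.add (hS.inv.posSemidef.conjTranspose_mul_mul_same D)
  simpa only [hE.inv.isHermitian.eq, hquad, hconj] using hpsd.conjTranspose_mul_mul_same E⁻¹

end Matrix.PosDef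

theorem kalman_precision_uniform_bounds_general
    {Nθ Ny : ℕ}
    (G : Matrix (Fin Ny) (Fin Nθ) ℝ)
    (Sν : Matrix (Fin Ny) (Fin Ny) ℝ) (hSν : Sν.PosDef)
    (Sω : Matrix (Fin Nθ) (Fin Nθ) ℝ) (hSω : Sω.PosDef)
    (α : ℝ)
    (C : ℕ → Matrix (Fin Nθ) (Fin Nθ) ℝ) (hC0 : (C 0).PosSemidef)
    (hCrec : ∀ n, C (n + 1) = (Gᵀ * Sν⁻¹ * G + (α ^ 2 • C n + Sω)⁻¹)⁻¹) :
    ∀ n : ℕ, 1 ≤ n → (C n).PosDef ∧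
      ((C n)⁻¹ - Gᵀ * Sν⁻¹ * G).PosSemidef ∧
      (Gᵀ * Sν⁻¹ * G + Sω⁻¹ - (C n)⁻¹).PosSemidef := by
  set K := Gᵀ * Sν⁻¹ * G
  have hK : K.PosSemidef := by
    simpa only [conjTranspose_eq_transpose_of_trivial] using
      hSν.inv.posSemidef.conjTranspose_mul_mul_same G
  have hprior (m : ℕ) (hm : (C m).PosSemidef) : (α ^ 2 • C m + Sω).PosDef :=
    PosDef.posSemidef_add (hm.smul (sq_nonneg α)) hSω
  have hposterior (m : ℕ) (hm : (C m).PosSemidef) : (K + (α ^ 2 • C m + Sω)⁻¹).PosDef :=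
    PosDef.posSemidef_add hK (hprior m hm).inv
  have hC (m : ℕ) : (C m).PosSemidef := by
    induction m with
    | zero => exact hC0
    | succ m ih => simpa only [hCrec m] using (hposterior m ih).inv.posSemidef
  rintro (_ | m) hm
  · omega
  have hM := hposterior m (hC m)
  rw [hCrec m, nonsing_inv_nonsing_inv _ ((isUnit_iff_isUnit_det _).mp hM.isUnit),
    add_sub_cancel_left, add_sub_add_left_eq_sub]
  exact ⟨hM.inv, (hprior m (hC m)).inv.posSemidef,
    hSω.posSemidef_inv_sub_inv_add ((hC m).smul (sq_nonneg α))⟩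

/-- Let `α ∈ (0,1]`, `Sν, Sω` symmetric positive definite, `C 0`
symmetric positive semidefinite, and `C (n+1)⁻¹ = Gᵀ Sν⁻¹ G + (α² C n + Sω)⁻¹`.
Then for every `n ≥ 1`, `C n` is positive definite and
`Gᵀ Sν⁻¹ G ⪯ (C n)⁻¹ ⪯ Gᵀ Sν⁻¹ G + Sω⁻¹`. -/
theorem kalman_precision_uniform_bounds
    {Nθ Ny : ℕ} (hNθ : 0 < Nθ) (hNy : 0 < Ny)
    (G : Matrix (Fin Ny) (Fin Nθ) ℝ)
    (Sν : Matrix (Fin Ny) (Fin Ny) ℝ) (hSν : Sν.PosDef)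
    (Sω : Matrix (Fin Nθ) (Fin Nθ) ℝ) (hSω : Sω.PosDef)
    (α : ℝ) (hα : α ∈ Set.Ioc (0 : ℝ) 1)
    (C : ℕ → Matrix (Fin Nθ) (Fin Nθ) ℝ) (hC0 : (C 0).PosSemidef)
    (hCrec : ∀ n, C (n + 1) = (Gᵀ * Sν⁻¹ * G + (α ^ 2 • C n + Sω)⁻¹)⁻¹) :
    ∀ n : ℕ, 1 ≤ n → (C n).PosDef ∧
      ((C n)⁻¹ - Gᵀ * Sν⁻¹ * G).PosSemidef ∧
      (Gᵀ * Sν⁻¹ * G + Sω⁻¹ - (C n)⁻¹).PosSemidef :=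
  kalman_precision_uniform_bounds_general G Sν hSν Sω hSω α C hC0 hCrec
end

section
/- Let α = 1, let Σ_ν and Σ_ω be symmetric positive definite, let C_0 be symmetric positive definite, and consider the recursion C_{n+1}⁻¹ = GᵀΣ_ν⁻¹G + (C_n + Σ_ω)⁻¹, C_{n+1}⁻¹ m_{n+1} = GᵀΣ_ν⁻¹y + (C_n + Σ_ω)⁻¹ m_n. Then the mean sequence {m_n} converges exponentially fast to a point m_∞ ∈ ℝ^{N_θ} satisfying GᵀΣ_ν⁻¹(y − G m_∞) = 0, i.e. m_∞ is a stationary point of θ ↦ ½‖Σ_ν^{-1/2}(y − Gθ)‖²: there exist K > 0 and r ∈ (0,1) such that ‖m_n − m_∞‖ ≤ K rⁿ for all n. -/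
/-!
Write `A = Gᵀ Σ_ν⁻¹ G` and `D n = C n + Σ_ω`. The vector `Gᵀ Σ_ν⁻¹ y` lies in the range of `A`;
for `θ` with `A θ = Gᵀ Σ_ν⁻¹ y` the errors `e n = m n - θ` satisfy `e n = (D n A + 1) e (n + 1)`.
This backward recursion contracts in the seminorm `q e = eᵀ A e`: since `Σ_ω ≥ s • 1` and
`A² ≥ c A` (`c` the least nonzero eigenvalue of `A`), `A (D n) A ≥ s c A`, and Cauchy–Schwarz
for `A` gives `q (e (n + 1)) ≤ (1 + s c)⁻² q (e n)`. On the other hand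
`C (n + 1) = (A + (D n)⁻¹)⁻¹ ≤ D n`, so `D n` grows at most linearly and the increments
`m n - m (n + 1) = D n A e (n + 1)` are `O(n ρⁿ)`. Hence `m n` converges geometrically, and its
limit `m∞` satisfies `A m∞ = A θ` because `A e n → 0`.
-/

open Matrix Filter Topology Set
open scoped MatrixOrder

lemma add_one_mul_pow_le_inv_one_sub {x : ℝ} (hx₀ : 0 ≤ x) (hx₁ : x < 1) (n : ℕ) :
    (n + 1) * x ^ n ≤ (1 - x)⁻¹ := by
  calc (n + 1) * x ^ n = ∑ _i ∈ Finset.range (n + 1), x ^ n := by simp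
    _ ≤ ∑ i ∈ Finset.range (n + 1), x ^ i := Finset.sum_le_sum fun i hi =>
      pow_le_pow_of_le_one hx₀ hx₁.le (Finset.mem_range_succ_iff.mp hi)
    _ ≤ (1 - x)⁻¹ := by
      have h := geom_sum_Ico_le_of_lt_one (m := 0) (n := n + 1) hx₀ hx₁
      rwa [← Finset.range_eq_Ico, pow_zero, one_div] at h

lemma exists_tendsto_dist_le_pow_of_dist_le_add_one_mul_pow {X : Type*} [PseudoMetricSpace X]
    [CompleteSpace X] {u : ℕ → X} {K r : ℝ} (hr : r ∈ Ioo 0 1)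
    (hu : ∀ n, dist (u n) (u (n + 1)) ≤ K * (n + 1) * r ^ n) :
    ∃ L, Tendsto u atTop (𝓝 L) ∧
      ∃ K' > 0, ∃ ρ ∈ Ioo (0 : ℝ) 1, ∀ n, dist (u n) L ≤ K' * ρ ^ n := by
  -- `(n + 1) rⁿ ≤ ρⁿ / (1 - ρ)` for `ρ = √r`, so the increments are geometric with ratio `ρ`.
  set ρ := √r
  have hρ : ρ ∈ Ioo 0 1 :=
    ⟨Real.sqrt_pos.mpr hr.1, (Real.sqrt_lt' one_pos).mpr (by simpa using hr.2)⟩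
  have hK : 0 ≤ K := by simpa using dist_nonneg.trans (hu 0)
  have hgeom : ∀ n, dist (u n) (u (n + 1)) ≤ K * (1 - ρ)⁻¹ * ρ ^ n := fun n => by
    have hr' : r ^ n = ρ ^ n * ρ ^ n := by rw [← mul_pow, Real.mul_self_sqrt hr.1.le]
    calc dist (u n) (u (n + 1)) ≤ K * ((n + 1) * ρ ^ n) * ρ ^ n :=
          (hu n).trans_eq (by rw [hr']; ring)
      _ ≤ K * (1 - ρ)⁻¹ * ρ ^ n := by
        gcongr
        exact add_one_mul_pow_le_inv_one_sub hρ.1.le hρ.2 n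
  obtain ⟨L, hL⟩ := cauchySeq_tendsto_of_complete (cauchySeq_of_le_geometric ρ _ hρ.2 hgeom)
  have h1ρ : 0 < 1 - ρ := sub_pos.mpr hρ.2
  refine ⟨L, hL, K * (1 - ρ)⁻¹ / (1 - ρ) + 1, by positivity, ρ, hρ, fun n => ?_⟩
  calc dist (u n) L ≤ K * (1 - ρ)⁻¹ * ρ ^ n / (1 - ρ) :=
        dist_le_of_le_geometric_of_tendsto ρ _ hρ.2 hgeom hL n
    _ ≤ (K * (1 - ρ)⁻¹ / (1 - ρ) + 1) * ρ ^ n := by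
      rw [mul_div_right_comm]
      gcongr
      linarith

section CFC
variable {A : Type*} [TopologicalSpace A] [Ring A] [StarRing A] [PartialOrder A]
  [StarOrderedRing A] [Algebra ℝ A] [ContinuousFunctionalCalculus ℝ A IsSelfAdjoint]
  [NonnegSpectrumClass ℝ A]

lemma IsStrictlyPositive.exists_pos_algebraMap_le {a : A} (ha : IsStrictlyPositive a) :
    ∃ r > 0, algebraMap ℝ A r ≤ a := by
  cases subsingleton_or_nontrivial A
  · exact ⟨1, one_pos, (Subsingleton.elim _ _).le⟩
  · exact (CFC.exists_pos_algebraMap_le_iff ha.isSelfAdjoint).mpr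
      ((StarOrderedRing.isStrictlyPositive_iff_spectrum_pos a).mp ha)

lemma IsSelfAdjoint.exists_le_algebraMap {a : A} (ha : IsSelfAdjoint a) :
    ∃ r > 0, a ≤ algebraMap ℝ A r := by
  obtain ⟨r, hr⟩ :=
    (ContinuousFunctionalCalculus.isCompact_spectrum (R := ℝ) a).isBounded.bddAbove
  exact ⟨max r 1, by positivity, (le_algebraMap_iff_spectrum_le ha).mpr
    fun x hx => (hr hx).trans (le_max_left r 1)⟩

lemma mul_self_le_smul_of_le_algebraMap {a : A} {t : ℝ} (ha : 0 ≤ a)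
    (hat : a ≤ algebraMap ℝ A t) : a * a ≤ t • a := by
  rw [le_algebraMap_iff_spectrum_le] at hat
  have key := (cfc_le_iff (fun x : ℝ => x ^ 2) (fun x => t * x) a).mpr fun x hx => by
    rw [sq]
    exact mul_le_mul_of_nonneg_right (hat x hx) (spectrum_nonneg_of_nonneg ha hx)
  rwa [cfc_pow_id a 2 (.of_nonneg ha), cfc_const_mul_id _ a (.of_nonneg ha), sq] at key

lemma exists_pos_smul_le_mul_self {a : A} (ha : 0 ≤ a) (hfin : (spectrum ℝ a).Finite) :
    ∃ c > (0 : ℝ), c • a ≤ a * a := by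
  obtain ⟨c, hc, hcle⟩ : ∃ c > (0 : ℝ), ∀ x ∈ spectrum ℝ a, 0 < x → c ≤ x := by
    by_cases h : (spectrum ℝ a ∩ Ioi 0).Nonempty
    · obtain ⟨c, ⟨-, hc⟩, hmin⟩ := (spectrum ℝ a ∩ Ioi 0).exists_min_image id
        (hfin.inter_of_left _) h
      exact ⟨c, hc, fun x hx hpos => hmin x ⟨hx, hpos⟩⟩
    · exact ⟨1, one_pos, fun x hx hpos => (h ⟨x, hx, hpos⟩).elim⟩
  refine ⟨c, hc, ?_⟩
  have key := (cfc_le_iff (fun x => c * x) (fun x : ℝ => x ^ 2) a).mpr fun x hx => by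
    rcases (spectrum_nonneg_of_nonneg ha hx).eq_or_lt with h0 | hpos
    · simp [← h0]
    · rw [sq]
      exact mul_le_mul_of_nonneg_right (hcle x hx hpos) hpos.le
  rwa [cfc_pow_id a 2 (.of_nonneg ha), cfc_const_mul_id _ a (.of_nonneg ha), sq] at key

end CFC

namespace Matrix
variable {ι ν : Type*} [Fintype ι] [Fintype ν]

lemma range_mulVecLin_transpose_mul_self {R : Type*} [Field R] [LinearOrder R]
    [IsStrictOrderedRing R] (M : Matrix ν ι R) :
    LinearMap.range (Mᵀ * M).mulVecLin = LinearMap.range Mᵀ.mulVecLin := by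
  refine Submodule.eq_of_le_of_finrank_le ?_ ?_
  · rw [mulVecLin_mul]
    exact LinearMap.range_comp_le_range _ _
  · change Mᵀ.rank ≤ (Mᵀ * M).rank
    rw [rank_transpose_mul_self, rank_transpose]

lemma PosSemidef.exists_transpose_mul_mul_mulVec_eq [DecidableEq ν] {P : Matrix ν ν ℝ}
    (hP : P.PosSemidef) (G : Matrix ν ι ℝ) (y : ν → ℝ) :
    ∃ θ, (Gᵀ * P * G) *ᵥ θ = (Gᵀ * P) *ᵥ y := by
  set H := CFC.sqrt P
  have hHH : H * H = P := CFC.sqrt_mul_sqrt_self P hP.nonneg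
  have hHt : Hᵀ = H := by
    rw [← conjTranspose_eq_transpose_of_trivial]
    exact (nonneg_iff_posSemidef.mp (CFC.sqrt_nonneg P)).isHermitian.eq
  have hgram : (H * G)ᵀ * (H * G) = Gᵀ * P * G := by
    rw [transpose_mul, hHt, Matrix.mul_assoc, ← Matrix.mul_assoc H, hHH, Matrix.mul_assoc]
  have hmem : (Gᵀ * P) *ᵥ y ∈ LinearMap.range (H * G)ᵀ.mulVecLin :=
    ⟨H *ᵥ y, by rw [mulVecLin_apply, mulVec_mulVec, transpose_mul, hHt, Matrix.mul_assoc, hHH]⟩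
  rwa [← range_mulVecLin_transpose_mul_self, hgram] at hmem

lemma dotProduct_mulVec_mono {P Q : Matrix ι ι ℝ} (h : P ≤ Q) (v : ι → ℝ) :
    v ⬝ᵥ (P *ᵥ v) ≤ v ⬝ᵥ (Q *ᵥ v) := by
  simpa [sub_mulVec, dotProduct_sub] using (le_iff.mp h).dotProduct_mulVec_nonneg v

lemma IsHermitian.dotProduct_mulVec_comm {P : Matrix ι ι ℝ} (hP : P.IsHermitian)
    (u v : ι → ℝ) : u ⬝ᵥ (P *ᵥ v) = v ⬝ᵥ (P *ᵥ u) := by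
  rw [dotProduct_mulVec, ← mulVec_transpose, ← conjTranspose_eq_transpose_of_trivial, hP.eq,
    dotProduct_comm]

lemma PosSemidef.dotProduct_mulVec_sq_le {P : Matrix ι ι ℝ} (hP : P.PosSemidef) (u v : ι → ℝ) :
    (u ⬝ᵥ (P *ᵥ v)) ^ 2 ≤ (u ⬝ᵥ (P *ᵥ u)) * (v ⬝ᵥ (P *ᵥ v)) := by
  classical
  have h := LinearMap.BilinForm.apply_mul_apply_le_of_forall_zero_le (toLinearMap₂' ℝ P)
    (fun x => by simpa [toLinearMap₂'_apply'] using hP.dotProduct_mulVec_nonneg x) u v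
  simp only [toLinearMap₂'_apply'] at h
  rwa [hP.isHermitian.dotProduct_mulVec_comm v u, ← sq] at h

lemma norm_toLp_sq (v : ι → ℝ) : ‖WithLp.toLp 2 v‖ ^ 2 = v ⬝ᵥ v := by
  rw [← real_inner_self_eq_norm_sq, EuclideanSpace.inner_eq_star_dotProduct]
  simp

lemma PosSemidef.one_add_sq_mul_dotProduct_mulVec_le {A D : Matrix ι ι ℝ} (hA : A.PosSemidef)
    {δ : ℝ} (hδ : 0 ≤ δ) (hAD : δ • A ≤ A * D * A) {x x' : ι → ℝ}
    (hx : x = D *ᵥ (A *ᵥ x') + x') :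
    (1 + δ) ^ 2 * (x' ⬝ᵥ (A *ᵥ x')) ≤ x ⬝ᵥ (A *ᵥ x) := by
  have hq' : 0 ≤ x' ⬝ᵥ (A *ᵥ x') := by simpa using hA.dotProduct_mulVec_nonneg x'
  have hq : 0 ≤ x ⬝ᵥ (A *ᵥ x) := by simpa using hA.dotProduct_mulVec_nonneg x
  have hlow : (1 + δ) * (x' ⬝ᵥ (A *ᵥ x')) ≤ x' ⬝ᵥ (A *ᵥ x) := by
    have h := dotProduct_mulVec_mono hAD x'
    rw [smul_mulVec, dotProduct_smul, smul_eq_mul, ← mulVec_mulVec, ← mulVec_mulVec] at h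
    rw [hx, mulVec_add, dotProduct_add]
    linarith
  have hcs := hA.dotProduct_mulVec_sq_le x' x
  rcases hq'.eq_or_lt with h0 | hpos
  · rw [← h0, mul_zero]
    exact hq
  · have h := (pow_le_pow_left₀ (by positivity) hlow 2).trans hcs
    exact le_of_mul_le_mul_left (by linarith) hpos

lemma PosSemidef.dotProduct_mulVec_le_of_eq_mulVec_mulVec_add {A : Matrix ι ι ℝ}
    {D : ℕ → Matrix ι ι ℝ} {e : ℕ → ι → ℝ} (hA : A.PosSemidef) {δ : ℝ} (hδ : 0 ≤ δ)
    (hAD : ∀ n, δ • A ≤ A * D n * A) (he : ∀ n, e n = D n *ᵥ (A *ᵥ e (n + 1)) + e (n + 1))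
    (n : ℕ) : e n ⬝ᵥ (A *ᵥ e n) ≤ ((1 + δ)⁻¹ ^ n) ^ 2 * (e 0 ⬝ᵥ (A *ᵥ e 0)) := by
  induction n with
  | zero => simp
  | succ n ih =>
    have h := hA.one_add_sq_mul_dotProduct_mulVec_le hδ (hAD n) (he n)
    calc e (n + 1) ⬝ᵥ (A *ᵥ e (n + 1))
        = (1 + δ)⁻¹ ^ 2 * ((1 + δ) ^ 2 * (e (n + 1) ⬝ᵥ (A *ᵥ e (n + 1)))) := by
          rw [← mul_assoc, ← mul_pow, inv_mul_cancel₀ (by positivity), one_pow, one_mul]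
      _ ≤ (1 + δ)⁻¹ ^ 2 * (((1 + δ)⁻¹ ^ n) ^ 2 * (e 0 ⬝ᵥ (A *ᵥ e 0))) :=
          mul_le_mul_of_nonneg_left (h.trans ih) (by positivity)
      _ = ((1 + δ)⁻¹ ^ (n + 1)) ^ 2 * (e 0 ⬝ᵥ (A *ᵥ e 0)) := by ring

variable [DecidableEq ι]

lemma algebraMap_mulVec (t : ℝ) (v : ι → ℝ) : algebraMap ℝ (Matrix ι ι ℝ) t *ᵥ v = t • v := by
  simp [Algebra.algebraMap_eq_smul_one, smul_mulVec]

lemma norm_toLp_mulVec_sq_le {P : Matrix ι ι ℝ} {t : ℝ} (hP : 0 ≤ P)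
    (hPt : P ≤ algebraMap ℝ _ t) (v : ι → ℝ) :
    ‖WithLp.toLp 2 (P *ᵥ v)‖ ^ 2 ≤ t * (v ⬝ᵥ (P *ᵥ v)) := by
  have h := dotProduct_mulVec_mono (mul_self_le_smul_of_le_algebraMap hP hPt) v
  rwa [← mulVec_mulVec, smul_mulVec, dotProduct_smul, smul_eq_mul,
    (nonneg_iff_posSemidef.mp hP).isHermitian.dotProduct_mulVec_comm, ← norm_toLp_sq] at h

lemma norm_toLp_mulVec_le {P : Matrix ι ι ℝ} {t : ℝ} (hP : 0 ≤ P) (hPt : P ≤ algebraMap ℝ _ t)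
    (ht : 0 ≤ t) (v : ι → ℝ) : ‖WithLp.toLp 2 (P *ᵥ v)‖ ≤ t * ‖WithLp.toLp 2 v‖ := by
  have h := dotProduct_mulVec_mono hPt v
  rw [algebraMap_mulVec, dotProduct_smul, smul_eq_mul, ← norm_toLp_sq] at h
  refine pow_le_pow_iff_left₀ (norm_nonneg _) (by positivity) two_ne_zero |>.mp ?_
  calc ‖WithLp.toLp 2 (P *ᵥ v)‖ ^ 2 ≤ t * (v ⬝ᵥ (P *ᵥ v)) := norm_toLp_mulVec_sq_le hP hPt v
    _ ≤ (t * ‖WithLp.toLp 2 v‖) ^ 2 := by nlinarith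

lemma PosDef.inv_le_inv_of_le_s10 {X Y : Matrix ι ι ℝ} (hY : Y.PosDef) (h : Y ≤ X) :
    X⁻¹ ≤ Y⁻¹ := by
  have hX : X.PosDef := by simpa using hY.add_posSemidef (le_iff.mp h)
  refine le_iff.mpr (.of_dotProduct_mulVec_nonneg (hY.inv.isHermitian.sub hX.inv.isHermitian)
    fun v => ?_)
  set u := X⁻¹ *ᵥ v
  set w := Y⁻¹ *ᵥ v
  have hXu : X *ᵥ u = v := by
    simp [u, mulVec_mulVec, mul_nonsing_inv _ ((isUnit_iff_isUnit_det X).mp hX.isUnit)]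
  have hYw : Y *ᵥ w = v := by
    simp [w, mulVec_mulVec, mul_nonsing_inv _ ((isUnit_iff_isUnit_det Y).mp hY.isUnit)]
  -- With `a = vᵀX⁻¹v = uᵀXu = uᵀYw`, Cauchy–Schwarz for `Y` gives `a² ≤ (uᵀYu)(wᵀYw) ≤ a (vᵀY⁻¹v)`.
  have hcs := hY.posSemidef.dotProduct_mulVec_sq_le u w
  have huYu := dotProduct_mulVec_mono h u
  rw [hYw, dotProduct_comm u v, dotProduct_comm w v] at hcs
  rw [hXu, dotProduct_comm u v] at huYu
  have ha := hX.inv.posSemidef.dotProduct_mulVec_nonneg v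
  have hb := hY.inv.posSemidef.dotProduct_mulVec_nonneg v
  simp only [star_trivial] at ha hb ⊢
  rw [sub_mulVec, dotProduct_sub, sub_nonneg]
  nlinarith

lemma PosSemidef.exists_pos_smul_le_mul_mul {A S : Matrix ι ι ℝ} (hA : A.PosSemidef)
    (hS : S.PosDef) : ∃ δ > (0 : ℝ), ∀ D, S ≤ D → δ • A ≤ A * D * A := by
  obtain ⟨s, hs, hsS⟩ := hS.isStrictlyPositive.exists_pos_algebraMap_le
  obtain ⟨c, hc, hcA⟩ := exists_pos_smul_le_mul_self hA.nonneg A.finite_spectrum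
  refine ⟨s * c, by positivity, fun D hSD => ?_⟩
  have hAstar : star A = A := hA.isHermitian.eq
  calc (s * c) • A = s • (c • A) := mul_smul s c A
    _ ≤ s • (A * A) := smul_le_smul_of_nonneg_left hcA hs.le
    _ = star A * algebraMap ℝ _ s * A := by
      rw [hAstar, Algebra.algebraMap_eq_smul_one, mul_smul_one, smul_mul_assoc]
    _ ≤ star A * D * A := star_left_conjugate_le_conjugate (hsS.trans hSD) A
    _ = A * D * A := by rw [hAstar]

theorem PosSemidef.tendsto_mulVec_zero_and_norm_sub_le_of_eq_mulVec_mulVec_add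
    {A S : Matrix ι ι ℝ} {D : ℕ → Matrix ι ι ℝ} {e : ℕ → ι → ℝ} (hA : A.PosSemidef) (hS : S.PosDef)
    (hSD : ∀ n, S ≤ D n) (hD : ∀ n, D n ≤ ((n : ℝ) + 1) • D 0)
    (he : ∀ n, e n = D n *ᵥ (A *ᵥ e (n + 1)) + e (n + 1)) :
    Tendsto (fun n => A *ᵥ e n) atTop (𝓝 0) ∧ ∃ K, ∃ ρ ∈ Ioo (0 : ℝ) 1,
      ∀ n, ‖WithLp.toLp 2 (e n - e (n + 1))‖ ≤ K * (n + 1) * ρ ^ n := by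
  obtain ⟨δ, hδ, hδA⟩ := hA.exists_pos_smul_le_mul_mul hS
  have hq := hA.dotProduct_mulVec_le_of_eq_mulVec_mulVec_add hδ.le (fun n => hδA _ (hSD n)) he
  set ρ := (1 + δ)⁻¹
  have hρ : ρ ∈ Ioo (0 : ℝ) 1 := ⟨by positivity, inv_lt_one_of_one_lt₀ (by linarith)⟩
  set q₀ := e 0 ⬝ᵥ (A *ᵥ e 0)
  have hq₀ : 0 ≤ q₀ := by simpa using hA.dotProduct_mulVec_nonneg (e 0)
  obtain ⟨μ, hμ, hAμ⟩ := (IsSelfAdjoint.of_nonneg hA.nonneg).exists_le_algebraMap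
  have hAe : ∀ n, ‖WithLp.toLp 2 (A *ᵥ e n)‖ ≤ √(μ * q₀) * ρ ^ n := fun n => by
    refine pow_le_pow_iff_left₀ (norm_nonneg _) (by positivity) two_ne_zero |>.mp ?_
    calc _ ≤ μ * (e n ⬝ᵥ (A *ᵥ e n)) := norm_toLp_mulVec_sq_le hA.nonneg hAμ (e n)
      _ ≤ μ * ((ρ ^ n) ^ 2 * q₀) := by gcongr; exact hq n
      _ = (√(μ * q₀) * ρ ^ n) ^ 2 := by rw [mul_pow, Real.sq_sqrt (by positivity)]; ring
  have hD0 : 0 ≤ D 0 := hS.posSemidef.nonneg.trans (hSD 0)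
  obtain ⟨κ, hκ, hDκ⟩ := (IsSelfAdjoint.of_nonneg hD0).exists_le_algebraMap
  have hDn : ∀ n w, ‖WithLp.toLp 2 (D n *ᵥ w)‖ ≤ ((n + 1) * κ) * ‖WithLp.toLp 2 w‖ := by
    intro n w
    refine norm_toLp_mulVec_le (hS.posSemidef.nonneg.trans (hSD n)) ((hD n).trans ?_)
      (by positivity) w
    rw [map_mul, Algebra.algebraMap_eq_smul_one ((n : ℝ) + 1), smul_one_mul]
    exact smul_le_smul_of_nonneg_left hDκ (by positivity)
  refine ⟨?_, √(μ * q₀) * κ, ρ, hρ, fun n => ?_⟩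
  · have h := squeeze_zero_norm hAe
      (by simpa using (tendsto_pow_atTop_nhds_zero_of_lt_one hρ.1.le hρ.2).const_mul √(μ * q₀))
    simpa [Function.comp_def] using ((PiLp.continuous_ofLp 2 _).tendsto 0).comp h
  · rw [he n, add_sub_cancel_right]
    calc ‖WithLp.toLp 2 (D n *ᵥ (A *ᵥ e (n + 1)))‖
        ≤ ((n + 1) * κ) * (√(μ * q₀) * ρ ^ (n + 1)) :=
          (hDn n _).trans (by gcongr; exact hAe (n + 1))
      _ ≤ ((n + 1) * κ) * (√(μ * q₀) * ρ ^ n) := by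
          gcongr _ * (_ * ?_)
          exact pow_le_pow_of_le_one hρ.1.le hρ.2.le n.le_succ
      _ = √(μ * q₀) * κ * (n + 1) * ρ ^ n := by ring

end Matrix

section Kalman
variable {ι : Type*} [Fintype ι] [DecidableEq ι] {A S : Matrix ι ι ℝ} {C : ℕ → Matrix ι ι ℝ}

lemma kalman_cov_posDef (hA : A.PosSemidef) (hS : S.PosDef) (hC0 : (C 0).PosDef)
    (hC : ∀ n, C (n + 1) = (A + (C n + S)⁻¹)⁻¹) (n : ℕ) : (C n).PosDef := by
  induction n with
  | zero => exact hC0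
  | succ n ih => exact hC n ▸ (PosDef.posSemidef_add hA (ih.add hS).inv).inv

lemma kalman_cov_succ_le (hA : A.PosSemidef) (hS : S.PosDef) (hC0 : (C 0).PosDef)
    (hC : ∀ n, C (n + 1) = (A + (C n + S)⁻¹)⁻¹) (n : ℕ) : C (n + 1) ≤ C n + S := by
  have hD := (kalman_cov_posDef hA hS hC0 hC n).add hS
  have h := hD.inv.inv_le_inv_of_le_s10 (le_add_of_nonneg_left hA.nonneg)
  rwa [nonsing_inv_nonsing_inv _ ((isUnit_iff_isUnit_det _).mp hD.isUnit), ← hC n] at h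

lemma kalman_cov_add_le (hA : A.PosSemidef) (hS : S.PosDef) (hC0 : (C 0).PosDef)
    (hC : ∀ n, C (n + 1) = (A + (C n + S)⁻¹)⁻¹) (n : ℕ) :
    C n + S ≤ ((n : ℝ) + 1) • (C 0 + S) := by
  induction n with
  | zero => simp
  | succ n ih =>
    calc C (n + 1) + S ≤ ((n : ℝ) + 1) • (C 0 + S) + (C 0 + S) :=
          add_le_add ((kalman_cov_succ_le hA hS hC0 hC n).trans ih)
            (le_add_of_nonneg_left hC0.posSemidef.nonneg)
      _ = ((↑(n + 1) : ℝ) + 1) • (C 0 + S) := by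
          push_cast
          rw [add_smul ((n : ℝ) + 1) 1, one_smul]

lemma kalman_mean_sub_eq (hA : A.PosSemidef) (hS : S.PosDef) (hC0 : (C 0).PosDef)
    (hC : ∀ n, C (n + 1) = (A + (C n + S)⁻¹)⁻¹) {θ : ι → ℝ} {x : ℕ → ι → ℝ}
    (hx : ∀ n, (C (n + 1))⁻¹ *ᵥ x (n + 1) = A *ᵥ θ + (C n + S)⁻¹ *ᵥ x n) (n : ℕ) :
    x n - θ = (C n + S) *ᵥ (A *ᵥ (x (n + 1) - θ)) + (x (n + 1) - θ) := by
  have hD := (kalman_cov_posDef hA hS hC0 hC n).add hS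
  have hX := PosDef.posSemidef_add hA hD.inv
  have h := congrArg ((C n + S) *ᵥ ·) (hx n)
  rw [hC n, nonsing_inv_nonsing_inv _ ((isUnit_iff_isUnit_det _).mp hX.isUnit)] at h
  simp only [mulVec_add, add_mulVec, mulVec_mulVec,
    mul_nonsing_inv _ ((isUnit_iff_isUnit_det _).mp hD.isUnit), one_mulVec] at h
  rw [mulVec_sub, mulVec_sub, mulVec_mulVec, mulVec_mulVec]
  linear_combination (norm := module) -h

end Kalman

theorem kalman_mean_convergence_alpha_one_general
    {Nθ Ny : ℕ}
    (G : Matrix (Fin Ny) (Fin Nθ) ℝ)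
    (y : EuclideanSpace ℝ (Fin Ny))
    (Sν : Matrix (Fin Ny) (Fin Ny) ℝ) (hSν : Sν.PosDef)
    (Sω : Matrix (Fin Nθ) (Fin Nθ) ℝ) (hSω : Sω.PosDef)
    (C : ℕ → Matrix (Fin Nθ) (Fin Nθ) ℝ) (hC0 : (C 0).PosDef)
    (hCrec : ∀ n, C (n + 1) = (Gᵀ * Sν⁻¹ * G + (C n + Sω)⁻¹)⁻¹)
    (m : ℕ → EuclideanSpace ℝ (Fin Nθ))
    (hmrec : ∀ n, (C (n + 1))⁻¹ *ᵥ m (n + 1) =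
      (Gᵀ * Sν⁻¹) *ᵥ y + (C n + Sω)⁻¹ *ᵥ m n) :
    ∃ minf : EuclideanSpace ℝ (Fin Nθ),
      (Gᵀ * Sν⁻¹) *ᵥ (y - show EuclideanSpace ℝ (Fin Ny) from WithLp.toLp 2 (G *ᵥ minf)) = 0 ∧
      ∃ K > (0 : ℝ), ∃ r ∈ Set.Ioo (0 : ℝ) 1, ∀ n : ℕ, ‖m n - minf‖ ≤ K * r ^ n := by
  set A := Gᵀ * Sν⁻¹ * G
  have hA : A.PosSemidef := by simpa [A] using hSν.inv.posSemidef.conjTranspose_mul_mul_same G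
  obtain ⟨θ, hθ⟩ := hSν.inv.posSemidef.exists_transpose_mul_mul_mulVec_eq G y
  set e := fun n => (m n).ofLp - θ
  have he : ∀ n, e n = (C n + Sω) *ᵥ (A *ᵥ e (n + 1)) + e (n + 1) :=
    kalman_mean_sub_eq hA hSω hC0 hCrec fun n => by rw [hθ]; exact hmrec n
  obtain ⟨hAe, K, ρ, hρ, hstep⟩ :=
    hA.tendsto_mulVec_zero_and_norm_sub_le_of_eq_mulVec_mulVec_add (D := fun n => C n + Sω) hSω
      (fun n => le_add_of_nonneg_left (kalman_cov_posDef hA hSω hC0 hCrec n).posSemidef.nonneg)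
      (kalman_cov_add_le hA hSω hC0 hCrec) he
  obtain ⟨minf, hlim, K', hK', r, hr, hdist⟩ :=
    exists_tendsto_dist_le_pow_of_dist_le_add_one_mul_pow hρ (u := m)
      fun n => by simpa [e, dist_eq_norm] using hstep n
  refine ⟨minf, ?_, K', hK', r, hr, fun n => by simpa [dist_eq_norm] using hdist n⟩
  have hAm : A *ᵥ minf = A *ᵥ θ := by
    refine tendsto_nhds_unique
      (((continuous_const.matrix_mulVec (PiLp.continuous_ofLp 2 _)).tendsto minf).comp hlim) ?_
    simpa [e, mulVec_sub, Function.comp_def] using hAe.add_const (A *ᵥ θ)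
  simp [mulVec_sub, mulVec_mulVec, ← hθ, A, hAm]

/-- Let `α = 1`, `Sν, Sω` symmetric positive definite, `C 0`
symmetric positive definite, with the recursion
`C (n+1)⁻¹ = Gᵀ Sν⁻¹ G + (C n + Sω)⁻¹`,
`C (n+1)⁻¹ m (n+1) = Gᵀ Sν⁻¹ y + (C n + Sω)⁻¹ m n`. Then the mean sequence `m n`
converges exponentially fast to a point `minf` satisfying
`Gᵀ Sν⁻¹ (y − G minf) = 0`, i.e. `minf` is a stationary point of
`θ ↦ ½‖Sν^{-1/2}(y − Gθ)‖²`. -/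
theorem kalman_mean_convergence_alpha_one
    {Nθ Ny : ℕ} (hNθ : 0 < Nθ) (hNy : 0 < Ny)
    (G : Matrix (Fin Ny) (Fin Nθ) ℝ)
    (y : EuclideanSpace ℝ (Fin Ny))
    (Sν : Matrix (Fin Ny) (Fin Ny) ℝ) (hSν : Sν.PosDef)
    (Sω : Matrix (Fin Nθ) (Fin Nθ) ℝ) (hSω : Sω.PosDef)
    (C : ℕ → Matrix (Fin Nθ) (Fin Nθ) ℝ) (hC0 : (C 0).PosDef)
    (hCrec : ∀ n, C (n + 1) = (Gᵀ * Sν⁻¹ * G + (C n + Sω)⁻¹)⁻¹)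
    (m : ℕ → EuclideanSpace ℝ (Fin Nθ))
    (hmrec : ∀ n, (C (n + 1))⁻¹ *ᵥ m (n + 1) =
      (Gᵀ * Sν⁻¹) *ᵥ y + (C n + Sω)⁻¹ *ᵥ m n) :
    ∃ minf : EuclideanSpace ℝ (Fin Nθ),
      (Gᵀ * Sν⁻¹) *ᵥ (y - show EuclideanSpace ℝ (Fin Ny) from WithLp.toLp 2 (G *ᵥ minf)) = 0 ∧
      ∃ K > (0 : ℝ), ∃ r ∈ Set.Ioo (0 : ℝ) 1, ∀ n : ℕ, ‖m n - minf‖ ≤ K * r ^ n :=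
  kalman_mean_convergence_alpha_one_general G y Sν hSν Sω hSω C hC0 hCrec m hmrec
end

section
/- Let Θ ∈ ℝ^{N×N} be invertible, Y₁, Y₂ ∈ ℝ^{p×N}, and w > 0. Define Ĉ = 2wΘΘᵀ and C^{θy} = wΘ(Y₁ − Y₂)ᵀ. Then (C^{θy})ᵀ Ĉ⁻¹ C^{θy} = (w/2)(Y₁ − Y₂)(Y₁ − Y₂)ᵀ, so that w(Y₁Y₁ᵀ + Y₂Y₂ᵀ) = (C^{θy})ᵀ Ĉ⁻¹ C^{θy} + (w/2)(Y₁ + Y₂)(Y₁ + Y₂)ᵀ, and the matrix (w/2)(Y₁ + Y₂)(Y₁ + Y₂)ᵀ is symmetric positive semidefinite. -/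
/-! The factors `Θ` in `C^{θy}` cancel against `Ĉ⁻¹ = (2w)⁻¹ Θᵀ⁻¹ Θ⁻¹`, leaving
`(w/2)(Y₁ - Y₂)(Y₁ - Y₂)ᵀ`; the decomposition is then the parallelogram law
`(Y₁ - Y₂)(Y₁ - Y₂)ᵀ + (Y₁ + Y₂)(Y₁ + Y₂)ᵀ = 2(Y₁Y₁ᵀ + Y₂Y₂ᵀ)`. -/

open Matrix

namespace Matrix

variable {m n R : Type*} [Fintype n]

theorem transpose_mul_inv_mul_self_mul_transpose [DecidableEq n] [CommRing R] (Θ : Matrix n n R)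
    (hΘ : IsUnit Θ.det) (A : Matrix m n R) :
    (Θ * Aᵀ)ᵀ * (Θ * Θᵀ)⁻¹ * (Θ * Aᵀ) = A * Aᵀ := by
  have hΘT : IsUnit Θᵀ.det := by rwa [det_transpose]
  calc (Θ * Aᵀ)ᵀ * (Θ * Θᵀ)⁻¹ * (Θ * Aᵀ)
      = A * (Θᵀ * Θᵀ⁻¹) * (Θ⁻¹ * Θ) * Aᵀ := by
        simp only [transpose_mul, transpose_transpose, mul_inv_rev, Matrix.mul_assoc]
    _ = A * Aᵀ := by
        rw [mul_nonsing_inv _ hΘT, nonsing_inv_mul _ hΘ, Matrix.mul_one, Matrix.mul_one]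

theorem inv_smul_of_ne_zero_s16 [DecidableEq n] [Field R] {A : Matrix n n R} (hA : IsUnit A.det)
    {k : R} (hk : k ≠ 0) : (k • A)⁻¹ = k⁻¹ • A⁻¹ := by
  let _ := invertibleOfNonzero hk
  rw [inv_smul _ _ hA, invOf_eq_inv]

theorem sub_mul_transpose_sub_add_add_mul_transpose_add [CommRing R] (A B : Matrix m n R) :
    (A - B) * (A - B)ᵀ + (A + B) * (A + B)ᵀ = (2 : R) • (A * Aᵀ + B * Bᵀ) := by
  simp only [transpose_sub, transpose_add, Matrix.sub_mul, Matrix.mul_sub, Matrix.add_mul,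
    Matrix.mul_add, two_smul]
  abel

theorem posSemidef_smul_mul_transpose [Finite m] [CommRing R] [PartialOrder R] [StarRing R]
    [StarOrderedRing R] [TrivialStar R] {c : R} (hc : 0 ≤ c) (A : Matrix m n R) :
    (c • (A * Aᵀ)).PosSemidef := by
  simpa only [conjTranspose_eq_transpose_of_trivial] using
    (posSemidef_self_mul_conjTranspose A).smul hc

end Matrix

/-- Let `Θ` be invertible, `Y₁, Y₂ ∈ ℝ^{p×N}`, `w > 0`,
`Chat = 2wΘΘᵀ` and `Cxy = wΘ(Y₁ − Y₂)ᵀ`. Then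
`Cxyᵀ Chat⁻¹ Cxy = (w/2)(Y₁ − Y₂)(Y₁ − Y₂)ᵀ`, so that
`w(Y₁Y₁ᵀ + Y₂Y₂ᵀ) = Cxyᵀ Chat⁻¹ Cxy + (w/2)(Y₁ + Y₂)(Y₁ + Y₂)ᵀ`, and
`(w/2)(Y₁ + Y₂)(Y₁ + Y₂)ᵀ` is symmetric positive semidefinite. -/
theorem unscented_covariance_decomposition
    {N p : ℕ}
    (Θ : Matrix (Fin N) (Fin N) ℝ) (hΘ : IsUnit Θ.det)
    (Y₁ Y₂ : Matrix (Fin p) (Fin N) ℝ)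
    (w : ℝ) (hw : 0 < w)
    (Chat : Matrix (Fin N) (Fin N) ℝ) (hChat : Chat = (2 * w) • (Θ * Θᵀ))
    (Cxy : Matrix (Fin N) (Fin p) ℝ) (hCxy : Cxy = w • (Θ * (Y₁ - Y₂)ᵀ)) :
    Cxyᵀ * Chat⁻¹ * Cxy = (w / 2) • ((Y₁ - Y₂) * (Y₁ - Y₂)ᵀ) ∧
      w • (Y₁ * Y₁ᵀ + Y₂ * Y₂ᵀ) =
        Cxyᵀ * Chat⁻¹ * Cxy + (w / 2) • ((Y₁ + Y₂) * (Y₁ + Y₂)ᵀ) ∧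
      ((w / 2) • ((Y₁ + Y₂) * (Y₁ + Y₂)ᵀ)).PosSemidef := by
  have hgram : IsUnit (Θ * Θᵀ).det := by
    rw [det_mul, det_transpose]
    exact hΘ.mul hΘ
  have hquad : Cxyᵀ * Chat⁻¹ * Cxy = (w / 2) • ((Y₁ - Y₂) * (Y₁ - Y₂)ᵀ) := by
    rw [hCxy, hChat, inv_smul_of_ne_zero_s16 hgram (by positivity), transpose_smul]
    simp only [Matrix.smul_mul, Matrix.mul_smul, smul_smul,
      transpose_mul_inv_mul_self_mul_transpose Θ hΘ]
    congr 1
    field_simp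
  refine ⟨hquad, ?_, posSemidef_smul_mul_transpose (by positivity) _⟩
  rw [hquad, ← smul_add, sub_mul_transpose_sub_add_add_mul_transpose_add, smul_smul]
  congr 1
  field_simp
end

section
/- Let C ∈ ℝ^{n×n} be symmetric positive semidefinite, M ∈ ℝ^{n×p}, and D ∈ ℝ^{p×p} be such that the block matrix [[C, M],[Mᵀ, D]] is positive semidefinite. Let Σ_ω ∈ ℝ^{n×n} and Σ_ν ∈ ℝ^{p×p} be symmetric positive definite and let α₀ ≥ 0. If 0 = −2α₀C + Σ_ω − MΣ_ν⁻¹Mᵀ, then C is positive definite (nonsingular). -/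
/-!
If `C x = 0`, the quadratic form of the positive semidefinite block matrix vanishes at `(x, 0)`,
so the block matrix annihilates `(x, 0)` and in particular `Mᵀ x = 0`. The steady-state equation
applied to `x` then gives `Sω x = 0`, hence `x = 0` since `Sω` is positive definite.
-/

open Matrix
open scoped ComplexOrder

namespace Matrix.PosSemidef

variable {𝕜 : Type*} [RCLike 𝕜] {m n : Type*} [Fintype m] [Fintype n]

theorem fromBlocks₂₁_mulVec_eq_zero {A : Matrix m m 𝕜} {B : Matrix m n 𝕜}
    {C : Matrix n m 𝕜} {D : Matrix n n 𝕜} (h : (fromBlocks A B C D).PosSemidef)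
    {x : m → 𝕜} (hx : A *ᵥ x = 0) : C *ᵥ x = 0 := by
  have hquad : star (Sum.elim x 0) ⬝ᵥ fromBlocks A B C D *ᵥ Sum.elim x 0 = 0 := by
    simp [fromBlocks_mulVec, hx, Function.star_sumElim]
  funext i
  simpa [fromBlocks_mulVec] using
    congrFun ((h.dotProduct_mulVec_zero_iff _).mp hquad) (Sum.inr i)

theorem posDef_of_ker_le {A B : Matrix n n 𝕜} (hA : A.PosSemidef) (hB : B.PosDef)
    (hker : ∀ x, A *ᵥ x = 0 → B *ᵥ x = 0) : A.PosDef := by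
  refine posDef_iff_dotProduct_mulVec.mpr ⟨hA.isHermitian, fun x hx => ?_⟩
  refine (hA.dotProduct_mulVec_nonneg x).lt_of_ne' fun h0 => ?_
  have hBx := hker x ((hA.dotProduct_mulVec_zero_iff x).mp h0)
  simpa [hBx] using (posDef_iff_dotProduct_mulVec.mp hB).2 hx

end Matrix.PosSemidef

theorem continuous_time_steady_covariance_nonsingular_general
    {n p : ℕ}
    (C : Matrix (Fin n) (Fin n) ℝ) (hC : C.PosSemidef)
    (M : Matrix (Fin n) (Fin p) ℝ) (D : Matrix (Fin p) (Fin p) ℝ)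
    (hblock : (Matrix.fromBlocks C M Mᵀ D).PosSemidef)
    (Sω : Matrix (Fin n) (Fin n) ℝ) (hSω : Sω.PosDef)
    (Sν : Matrix (Fin p) (Fin p) ℝ)
    (α₀ : ℝ)
    (heq : 0 = -((2 * α₀) • C) + Sω - M * Sν⁻¹ * Mᵀ) :
    C.PosDef := by
  refine hC.posDef_of_ker_le hSω fun x hCx => ?_
  have hMx : Mᵀ *ᵥ x = 0 := hblock.fromBlocks₂₁_mulVec_eq_zero hCx
  simpa [sub_mulVec, add_mulVec, neg_mulVec, smul_mulVec, ← mulVec_mulVec, hCx, hMx]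
    using (congrArg (· *ᵥ x) heq).symm

/-- Let `C` be symmetric positive semidefinite, and suppose the
block matrix `[[C, M], [Mᵀ, D]]` is positive semidefinite. Let `Sω, Sν` be symmetric
positive definite and `α₀ ≥ 0`. If `0 = −2α₀ C + Sω − M Sν⁻¹ Mᵀ`, then `C` is
positive definite (nonsingular). -/
theorem continuous_time_steady_covariance_nonsingular
    {n p : ℕ}
    (C : Matrix (Fin n) (Fin n) ℝ) (hC : C.PosSemidef)
    (M : Matrix (Fin n) (Fin p) ℝ) (D : Matrix (Fin p) (Fin p) ℝ)
    (hblock : (Matrix.fromBlocks C M Mᵀ D).PosSemidef)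
    (Sω : Matrix (Fin n) (Fin n) ℝ) (hSω : Sω.PosDef)
    (Sν : Matrix (Fin p) (Fin p) ℝ) (hSν : Sν.PosDef)
    (α₀ : ℝ) (hα₀ : 0 ≤ α₀)
    (heq : 0 = -((2 * α₀) • C) + Sω - M * Sν⁻¹ * Mᵀ) :
    C.PosDef :=
  continuous_time_steady_covariance_nonsingular_general C hC M D hblock Sω hSω Sν α₀ heq
end
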